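/- arXiv:1602.05504 — 12 statements merged into one kernel-verified Lean document; each statement's English description precedes it below -/
import Mathlib

section
/- Let θ be a partial action of a group G on a set A. The relation on G × A given by (x,a) ∼ (y,b) iff θ(y⁻¹x, a) is defined and equals b is an equivalence relation. -/
universe u

def IsPartialAction {G A : Type u} [Group G] (θ : G → A → Option A) : Prop :=
  (∀ a, θ 1 a = some a) ∧
  (∀ x a b, θ x a = some b → θ x⁻¹ b = some a) ∧
  (∀ x y a b c, θ y a = some b → θ x b = some c → θ (x * y) a = some c)

/-- The relation `(x,a) ∼ (y,b) ↔ θ(y⁻¹x, a) = b` on `G × A`. -/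
def glueRel {G A : Type u} [Group G] (θ : G → A → Option A) : G × A → G × A → Prop :=
  fun p q => θ (q.1⁻¹ * p.1) p.2 = some q.2

/-- `∼` is an equivalence relation. -/
theorem stmt_1 {G A : Type u} [Group G] (θ : G → A → Option A)
    (h : IsPartialAction θ) : Equivalence (glueRel θ) := by
  obtain ⟨h1, h2, h3⟩ := h
  constructor
  · intro p; simp [glueRel, h1]
  · intro p q hpq
    have := h2 _ _ _ hpq
    simpa [glueRel, mul_inv_rev] using this
  · intro p q r hpq hqr
    have := h3 _ _ _ _ _ hpq hqr
    simpa [glueRel, mul_assoc] using this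
end

section
/- Let θ be a partial action of a group G on a set A, let A^U = (G × A)/∼ where (x,a) ∼ (y,b) iff θ(y⁻¹x,a) is defined and equals b, and write [x,a] for the class of (x,a). Then the map θ^U(x, [y,a]) = [xy, a] is a well-defined global action of G on A^U, and the map ι : A → A^U, ι(a) = [1,a], is injective. -/
universe u


lemma glueRel_of_eqvGen {G A : Type u} [Group G] (θ : G → A → Option A)
    (h : IsPartialAction θ) {p q : G × A}
    (hpq : Relation.EqvGen (glueRel θ) p q) : glueRel θ p q := by
  induction hpq with
  | rel p q hr => exact hr
  | refl p => simpa [glueRel] using h.1 p.2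
  | symm p q _ ih =>
      have := h.2.1 _ _ _ ih
      simpa [glueRel, mul_inv_rev] using this
  | trans p q s _ _ ih1 ih2 =>
      have := h.2.2 _ _ _ _ _ ih1 ih2
      simpa [glueRel, mul_assoc] using this

/-- the formula `x·[y,a] = [xy,a]` is a well-defined global action of `G`
on `A^U = (G×A)/∼`, and `a ↦ [1,a]` is injective. -/
theorem stmt_2 {G A : Type u} [Group G] (θ : G → A → Option A)
    (h : IsPartialAction θ) :
    (∃ Θ : G → Quot (glueRel θ) → Quot (glueRel θ),
      (∀ x y a, Θ x (Quot.mk (glueRel θ) (y, a)) = Quot.mk (glueRel θ) (x * y, a)) ∧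
      (∀ q, Θ 1 q = q) ∧
      (∀ x y q, Θ x (Θ y q) = Θ (x * y) q)) ∧
    Function.Injective (fun a : A => Quot.mk (glueRel θ) (1, a)) := by
  constructor
  · refine ⟨fun x => Quot.lift (fun p => Quot.mk (glueRel θ) (x * p.1, p.2)) ?_, ?_, ?_, ?_⟩
    · intro p q hpq
      apply Quot.sound
      simpa [glueRel, mul_assoc] using hpq
    · intro x y a; rfl
    · intro q
      induction q using Quot.ind with
      | _ p => simp
    · intro x y q
      induction q using Quot.ind with
      | _ p => simp [mul_assoc]
  · intro a b hab
    have := glueRel_of_eqvGen θ h (Quot.eqvGen_exact hab)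
    simp only [glueRel] at this
    rw [inv_one, one_mul, h.1 a] at this
    exact Option.some.inj this
end

section
/- Let θ be a partial action of a group G on a set A, with A^U = (G×A)/∼ and ι(a) = [1,a] as above, and let θ^U be the induced global action x·[y,a] = [xy,a]. Then for all x ∈ G and a ∈ A: θ(x,a) is defined if and only if x·ι(a) ∈ ι(A). (Thus (θ^U, A^U) with ι is a globalization of (θ,A).) -/
universe u

lemma defined_resp {G A : Type u} [Group G] (θ : G → A → Option A)
    (h : IsPartialAction θ) : ∀ p q : G × A, glueRel θ p q →
      ((θ p.1 p.2).isSome = (θ q.1 q.2).isSome) := by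
  obtain ⟨h1, h2, h3⟩ := h
  rintro ⟨x, a⟩ ⟨y, b⟩ (hr : θ (y⁻¹ * x) a = some b)
  have hback : θ (x⁻¹ * y) b = some a := by
    have := h2 _ _ _ hr; simpa [mul_inv_rev] using this
  simp only
  apply Bool.eq_iff_iff.mpr
  constructor
  · intro hx
    obtain ⟨c, hc⟩ := Option.isSome_iff_exists.mp hx
    have := h3 x (x⁻¹ * y) b a c hback hc
    simpa [mul_assoc] using Option.isSome_iff_exists.mpr ⟨c, this⟩
  · intro hy
    obtain ⟨c, hc⟩ := Option.isSome_iff_exists.mp hy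
    have := h3 y (y⁻¹ * x) a b c hr hc
    simpa [mul_assoc] using Option.isSome_iff_exists.mpr ⟨c, this⟩

/-- `θ(x,a)` is defined iff `x·ι(a) = [x,a]` lies in `ι(A)`;
together with equivariance of `ι`, this makes `(θ^U, A^U)` a globalization of `(θ,A)`. -/
theorem stmt_3 {G A : Type u} [Group G] (θ : G → A → Option A)
    (h : IsPartialAction θ) :
    (∀ x a b, θ x a = some b →
      Quot.mk (glueRel θ) (x, a) = Quot.mk (glueRel θ) ((1 : G), b)) ∧
    (∀ (x : G) (a : A), (θ x a).isSome ↔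
      Quot.mk (glueRel θ) (x, a) ∈
        Set.range (fun b : A => Quot.mk (glueRel θ) ((1 : G), b))) := by
  obtain ⟨h1, h2, h3⟩ := h
  have key : ∀ x a b, θ x a = some b →
      Quot.mk (glueRel θ) (x, a) = Quot.mk (glueRel θ) ((1 : G), b) := by
    intro x a b hb
    exact Quot.sound (by simpa [glueRel] using hb)
  refine ⟨key, fun x a => ?_⟩
  constructor
  · intro hx
    obtain ⟨b, hb⟩ := Option.isSome_iff_exists.mp hx
    exact ⟨b, (key x a b hb).symm⟩
  · rintro ⟨b, hb⟩
    have := congrArg (Quot.lift (fun p : G × A => (θ p.1 p.2).isSome)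
      (defined_resp θ ⟨h1, h2, h3⟩)) hb.symm
    simpa [h1 b] using this
end

section
/- Let θ be a partial action of a group G on a set A, and let ι' : (θ,A) → (ϑ',B') be any globalization. Then there exists a unique G-equivariant map κ : A^U → B' with ι' = κ ∘ ι, where ι(a) = [1,a]; moreover κ is injective. (Universality of the globalization (θ^U, A^U).) -/
universe u

/-- universality of the globalization `(θ^U, A^U)`: for any globalization
`ι' : A → B'` there is a unique equivariant `κ : A^U → B'` with `ι' = κ ∘ ι`,
and `κ` is injective. -/
theorem stmt_4 {G A B' : Type u} [Group G] [MulAction G B']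
    (θ : G → A → Option A) (h : IsPartialAction θ)
    (ι' : A → B') (hinj : Function.Injective ι')
    (hequiv : ∀ x a b, θ x a = some b → x • ι' a = ι' b)
    (hglob : ∀ (x : G) (a : A), (θ x a).isSome ↔ x • ι' a ∈ Set.range ι') :
    ∃ κ : Quot (glueRel θ) → B',
      ((∀ (x y : G) (a : A),
          κ (Quot.mk (glueRel θ) (x * y, a)) = x • κ (Quot.mk (glueRel θ) (y, a))) ∧
       (∀ a : A, ι' a = κ (Quot.mk (glueRel θ) ((1 : G), a))) ∧
       Function.Injective κ) ∧
      ∀ κ' : Quot (glueRel θ) → B',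
        (∀ (x y : G) (a : A),
          κ' (Quot.mk (glueRel θ) (x * y, a)) = x • κ' (Quot.mk (glueRel θ) (y, a))) →
        (∀ a : A, ι' a = κ' (Quot.mk (glueRel θ) ((1 : G), a))) → κ' = κ := by
  refine ⟨Quot.lift (fun p => p.1 • ι' p.2) ?_, ⟨?_, ?_, ?_⟩, ?_⟩
  · rintro ⟨x, a⟩ ⟨y, b⟩ hr
    have := hequiv _ _ _ hr
    have : (y⁻¹ * x) • ι' a = ι' b := this
    simp only []
    calc x • ι' a = y • ((y⁻¹ * x) • ι' a) := by rw [← mul_smul]; group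
    _ = y • ι' b := by rw [this]
  · intro x y a
    simp [mul_smul]
  · intro a; simp
  · intro p q
    induction p using Quot.ind with | _ p =>
    induction q using Quot.ind with | _ q =>
    obtain ⟨x, a⟩ := p; obtain ⟨y, b⟩ := q
    intro hpq
    simp only [Quot.lift_mk] at hpq
    have h1 : (y⁻¹ * x) • ι' a = ι' b := by
      rw [mul_smul, hpq, ← mul_smul]; simp
    have h2 : (θ (y⁻¹ * x) a).isSome := (hglob _ _).2 ⟨b, h1.symm⟩
    obtain ⟨c, hc⟩ := Option.isSome_iff_exists.1 h2
    have := hequiv _ _ _ hc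
    have hcb : c = b := hinj (by rw [← this, h1])
    exact Quot.sound (show glueRel θ (x, a) (y, b) from hcb ▸ hc)
  · intro κ' heq hι
    funext p
    induction p using Quot.ind with | _ p =>
    obtain ⟨x, a⟩ := p
    have : κ' (Quot.mk (glueRel θ) (x, a)) = x • κ' (Quot.mk (glueRel θ) (1, a)) := by
      simpa using heq x 1 a
    rw [this, ← hι]
end

section
/- Let θ be a partial action of G on A preserving an n-ary relation ρ on A (in the sense that (a₁,…,aₙ) ∈ ρ and all θ(x,aᵢ) defined imply (θ(x,a₁),…,θ(x,aₙ)) ∈ ρ). Let (ϑ,B,σ) be a global action of G on a set B preserving an n-ary relation σ, and let φ : A → B be an equivariant map with φ(ρ) ⊆ σ. Then the unique equivariant map ψ : A^U → B with φ = ψ∘[1,−] satisfies ψ(ρ^U) ⊆ σ, where ρ^U = {([x,a₁],…,[x,aₙ]) : (a₁,…,aₙ) ∈ ρ, x ∈ G}. (Reflector property of (θ^U, A^U, ρ^U) for partial actions on relational systems.) -/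
universe u

/-- reflector property for partial actions on relational systems.  If `φ` is an
equivariant map into a global action `(ϑ,B)` with `φ(ρ) ⊆ σ`, then the unique equivariant
map `ψ : A^U → B` given by `ψ([x,a]) = x • φ(a)` satisfies `ψ(ρ^U) ⊆ σ`. -/
theorem stmt_6 {G A B : Type u} [Group G] [MulAction G B]
    (θ : G → A → Option A) (h : IsPartialAction θ) {m : ℕ}
    (ρ : (Fin m → A) → Prop) (σ : (Fin m → B) → Prop)
    (hpres : ∀ (x : G) (a b : Fin m → A),
      (∀ i, θ x (a i) = some (b i)) → ρ a → ρ b)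
    (hσ : ∀ (z : G) (b : Fin m → B), σ b → σ (fun i => z • b i))
    (φ : A → B)
    (hφ : ∀ x a b, θ x a = some b → x • φ a = φ b)
    (hρσ : ∀ a, ρ a → σ (fun i => φ (a i))) :
    ∀ ψ : Quot (glueRel θ) → B,
      (∀ (x : G) (a : A), ψ (Quot.mk (glueRel θ) (x, a)) = x • φ a) →
      ∀ c : Fin m → Quot (glueRel θ),
        (∃ (x : G) (a : Fin m → A), ρ a ∧ ∀ i, c i = Quot.mk (glueRel θ) (x, a i)) →
        σ (fun i => ψ (c i)) := by
  rintro ψ hψ c ⟨x, a, hρa, hc⟩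
  simp only [hc, hψ]
  exact hσ x _ (hρσ a hρa)
end

section
/- Let θ be a partial action of a group G on a partial algebra 𝒜 (so each θₓ is an isomorphism of relative subalgebras, i.e., whenever x·a₁,…,x·aₙ and x·f(a₁,…,aₙ) are all defined, then f(x·a₁,…,x·aₙ) is defined and equals x·f(a₁,…,aₙ)). Then (θ,𝒜) admits a globalization in the category of global actions on partial algebras if and only if for every n-ary operation f, all a₁,…,aₙ ∈ A and x ∈ G: if f(a₁,…,aₙ), x·a₁, …, x·aₙ are all defined, then f(x·a₁,…,x·aₙ) = x·f(a₁,…,aₙ) as partial elements (either both undefined, or both defined and equal). -/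
universe u

/-- A partial action of `G` on the partial algebra `(A, F)` of type `(γ, n)`:
a partial action on the set `A` such that each `θₓ` is an isomorphism between
relative subalgebras: if all `x·aᵢ` and `x·f(a)` are defined, then
`f(x·a₁,…,x·aₙ)` is defined and equals `x·f(a₁,…,aₙ)`. -/
def IsPartialAlgAction {G γ A : Type u} [Group G] (n : γ → ℕ)
    (θ : G → A → Option A) (F : ∀ g, (Fin (n g) → A) → Option A) : Prop :=
  IsPartialAction θ ∧
  ∀ (x : G) (g : γ) (a b : Fin (n g) → A) (u c : A),
    (∀ i, θ x (a i) = some (b i)) → F g a = some u → θ x u = some c →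
    F g b = some c

/-- `(θ, (A,F))` admits a globalization in the category of global actions on
partial algebras: a partial algebra `(B, FB)` with a global action of `G` by
automorphisms and an injective homomorphism `ι : A → B` whose image is a relative
subalgebra, such that `θ(x,a)` is defined iff `x·ι(a) ∈ ι(A)`. -/
def HasPAlgGlobalization {G γ A : Type u} [Group G] (n : γ → ℕ)
    (θ : G → A → Option A) (F : ∀ g, (Fin (n g) → A) → Option A) : Prop :=
  ∃ (B : Type u) (FB : ∀ g, (Fin (n g) → B) → Option B)
    (act : G → B → B) (ι : A → B),
    (∀ b, act 1 b = b) ∧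
    (∀ x y b, act x (act y b) = act (x * y) b) ∧
    (∀ (x : G) (g : γ) (b : Fin (n g) → B),
      FB g (fun i => act x (b i)) = Option.map (act x) (FB g b)) ∧
    Function.Injective ι ∧
    (∀ (g : γ) (a : Fin (n g) → A) (u : A),
      F g a = some u → FB g (fun i => ι (a i)) = some (ι u)) ∧
    (∀ (g : γ) (a : Fin (n g) → A) (c : A),
      FB g (fun i => ι (a i)) = some (ι c) → F g a = some c) ∧
    (∀ x a b, θ x a = some b → act x (ι a) = ι b) ∧
    (∀ (x : G) (a : A), (θ x a).isSome ↔ act x (ι a) ∈ Set.range ι)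

namespace Stmt7Aux

variable {G γ A : Type u} [Group G]

def glueSetoid (θ : G → A → Option A) (hθ : IsPartialAction θ) : Setoid (G × A) where
  r := glueRel θ
  iseqv := by
    constructor
    · intro p
      show θ (p.1⁻¹ * p.1) p.2 = some p.2
      rw [inv_mul_cancel]
      exact hθ.1 p.2
    · intro p q hpq
      have h2 := hθ.2.1 _ _ _ hpq
      show θ (p.1⁻¹ * q.1) q.2 = some p.2
      simpa [mul_inv_rev] using h2
    · intro p q r h1 h2
      show θ (r.1⁻¹ * p.1) p.2 = some r.2
      have h3 := hθ.2.2 _ _ _ _ _ h1 h2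
      simpa [mul_assoc] using h3

variable (θ : G → A → Option A) (hθ : IsPartialAction θ)

def PB : Type u := Quotient (glueSetoid θ hθ)

def pmk (p : G × A) : PB θ hθ := Quotient.mk (glueSetoid θ hθ) p

theorem pmk_exact {p q : G × A} (h : pmk θ hθ p = pmk θ hθ q) : glueRel θ p q :=
  Quotient.exact h

theorem pmk_sound {p q : G × A} (h : glueRel θ p q) : pmk θ hθ p = pmk θ hθ q :=
  Quotient.sound h

def pact (x : G) : PB θ hθ → PB θ hθ :=
  Quotient.map (fun p => (x * p.1, p.2)) (by
    intro p q hpq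
    show θ ((x * q.1)⁻¹ * (x * p.1)) p.2 = some q.2
    have he : (x * q.1)⁻¹ * (x * p.1) = q.1⁻¹ * p.1 := by group
    rw [he]
    exact hpq)

theorem pact_mk (x : G) (p : G × A) :
    pact θ hθ x (pmk θ hθ p) = pmk θ hθ (x * p.1, p.2) := rfl

theorem pact_inv_pact (x : G) (b : PB θ hθ) : pact θ hθ x⁻¹ (pact θ hθ x b) = b := by
  induction b using Quotient.ind with
  | _ p =>
    show pmk θ hθ (x⁻¹ * (x * p.1), p.2) = pmk θ hθ p
    rw [inv_mul_cancel_left]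

open Classical in
noncomputable def pF (n : γ → ℕ) (F : ∀ g, (Fin (n g) → A) → Option A)
    (g : γ) (β : Fin (n g) → PB θ hθ) : Option (PB θ hθ) :=
  if h : ∃ w : (G × (Fin (n g) → A)) × A,
      (∀ i, β i = pmk θ hθ (w.1.1, w.1.2 i)) ∧ F g w.1.2 = some w.2
  then some (pmk θ hθ (h.choose.1.1, h.choose.2))
  else none

theorem pF_spec (n : γ → ℕ) (F : ∀ g, (Fin (n g) → A) → Option A)
    (hyp : ∀ (x : G) (g : γ) (a b : Fin (n g) → A) (u : A),
      (∀ i, θ x (a i) = some (b i)) → F g a = some u → F g b = θ x u) (g : γ) (β : Fin (n g) → PB θ hθ) (x : G) (a : Fin (n g) → A) (u : A)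
    (hβ : ∀ i, β i = pmk θ hθ (x, a i)) (hF : F g a = some u) :
    pF θ hθ n F g β = some (pmk θ hθ (x, u)) := by
  have hex : ∃ w : (G × (Fin (n g) → A)) × A,
      (∀ i, β i = pmk θ hθ (w.1.1, w.1.2 i)) ∧ F g w.1.2 = some w.2 :=
    ⟨((x, a), u), hβ, hF⟩
  rw [pF, dif_pos hex]
  obtain ⟨h1, h2⟩ := hex.choose_spec
  congr 1
  apply pmk_sound
  have hrel : ∀ i, θ (x⁻¹ * hex.choose.1.1) (hex.choose.1.2 i) = some (a i) := fun i =>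
    pmk_exact θ hθ ((h1 i).symm.trans (hβ i))
  have h3 := hyp (x⁻¹ * hex.choose.1.1) g hex.choose.1.2 a hex.choose.2 hrel h2
  show θ (x⁻¹ * hex.choose.1.1) hex.choose.2 = some u
  exact h3.symm.trans hF

theorem pF_eq_some (n : γ → ℕ) (F : ∀ g, (Fin (n g) → A) → Option A) (g : γ) (β : Fin (n g) → PB θ hθ) (v : PB θ hθ)
    (h : pF θ hθ n F g β = some v) :
    ∃ (x : G) (a : Fin (n g) → A) (u : A),
      (∀ i, β i = pmk θ hθ (x, a i)) ∧ F g a = some u ∧ v = pmk θ hθ (x, u) := by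
  rw [pF] at h
  split at h
  · rename_i hex
    obtain ⟨h1, h2⟩ := hex.choose_spec
    exact ⟨hex.choose.1.1, hex.choose.1.2, hex.choose.2, h1, h2, (Option.some.inj h).symm⟩
  · exact absurd h (by simp)

end Stmt7Aux

open Stmt7Aux in
/-- a partial action on a partial algebra admits a globalization iff
whenever `f(a₁,…,aₙ)` and all `x·aᵢ` are defined, `f(x·a₁,…,x·aₙ) = x·f(a₁,…,aₙ)`
as partial elements. -/
theorem stmt_7 {G γ A : Type u} [Group G] (n : γ → ℕ)
    (θ : G → A → Option A) (F : ∀ g, (Fin (n g) → A) → Option A)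
    (h : IsPartialAlgAction n θ F) :
    HasPAlgGlobalization n θ F ↔
      ∀ (x : G) (g : γ) (a b : Fin (n g) → A) (u : A),
        (∀ i, θ x (a i) = some (b i)) → F g a = some u → F g b = θ x u := by
  constructor
  · rintro ⟨B, FB, act, ι, hone, hmul, hequi, hinj, hF1, hF2, hθι, hrange⟩ x g a b u hab hFa
    have hb : ∀ i, act x (ι (a i)) = ι (b i) := fun i => hθι _ _ _ (hab i)
    have h1 : FB g (fun i => ι (b i)) = some (act x (ι u)) := by
      have h2 := hequi x g (fun i => ι (a i))
      rw [hF1 g a u hFa] at h2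
      have hfun : (fun i => ι (b i)) = (fun i => act x (ι (a i))) :=
        funext fun i => (hb i).symm
      rw [hfun, h2]
      rfl
    cases hxu : θ x u with
    | some c =>
        have hc : act x (ι u) = ι c := hθι _ _ _ hxu
        exact hF2 g b c (by rw [h1, hc])
    | none =>
        cases hFb : F g b with
        | none => rfl
        | some c =>
            have h2 := hF1 g b c hFb
            have h3 : act x (ι u) = ι c := Option.some.inj (h1.symm.trans h2)
            have h4 := (hrange x u).mpr ⟨c, h3.symm⟩
            rw [hxu] at h4
            simp at h4
  · intro hyp
    obtain ⟨hθ, -⟩ := h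
    refine ⟨PB θ hθ, pF θ hθ n F, pact θ hθ, fun a => pmk θ hθ (1, a),
      ?_, ?_, ?_, ?_, ?_, ?_, ?_, ?_⟩
    · intro b
      induction b using Quotient.ind with
      | _ p =>
        show pmk θ hθ (1 * p.1, p.2) = pmk θ hθ p
        rw [one_mul]
    · intro x y b
      induction b using Quotient.ind with
      | _ p =>
        show pmk θ hθ (x * (y * p.1), p.2) = pmk θ hθ (x * y * p.1, p.2)
        rw [mul_assoc]
    · intro x g β
      by_cases hex : ∃ w : (G × (Fin (n g) → A)) × A,
          (∀ i, β i = pmk θ hθ (w.1.1, w.1.2 i)) ∧ F g w.1.2 = some w.2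
      · obtain ⟨⟨⟨w, a⟩, u⟩, hβ, hF⟩ := hex
        have h1 := pF_spec θ hθ n F hyp g β w a u hβ hF
        have h2 := pF_spec θ hθ n F hyp g (fun i => pact θ hθ x (β i)) (x * w) a u
          (fun i => by show pact θ hθ x (β i) = pmk θ hθ (x * w, a i); rw [hβ i]; rfl) hF
        rw [h1, h2]
        rfl
      · have h1 : pF θ hθ n F g β = none := by rw [pF, dif_neg hex]
        have h2 : pF θ hθ n F g (fun i => pact θ hθ x (β i)) = none := by
          rw [pF, dif_neg]
          rintro ⟨⟨⟨w, a⟩, u⟩, hβ, hF⟩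
          refine hex ⟨((x⁻¹ * w, a), u), fun i => ?_, hF⟩
          have h3 : pact θ hθ x⁻¹ (pact θ hθ x (β i)) = β i := pact_inv_pact θ hθ x (β i)
          rw [← h3, hβ i]
          show pmk θ hθ (x⁻¹ * w, a i) = _
          rfl
        rw [h1, h2]
        rfl
    · intro a b hab
      have h1 := pmk_exact θ hθ hab
      have h2 : θ ((1:G)⁻¹ * 1) a = some b := h1
      rw [inv_one, one_mul, hθ.1 a] at h2
      exact Option.some.inj h2
    · intro g a u hF
      exact pF_spec θ hθ n F hyp g _ 1 a u (fun i => rfl) hF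
    · intro g a c hFB
      obtain ⟨x, a', u, hβ, hF', hv⟩ := pF_eq_some θ hθ n F g _ _ hFB
      have h1 : ∀ i, θ x⁻¹ (a i) = some (a' i) := by
        intro i
        have h2 : glueRel θ (1, a i) (x, a' i) := pmk_exact θ hθ (hβ i)
        have h3 : θ (x⁻¹ * 1) (a i) = some (a' i) := h2
        rwa [mul_one] at h3
      have h2 : θ x⁻¹ c = some u := by
        have hcv : pmk θ hθ (1, c) = pmk θ hθ (x, u) := hv
        have h3 : glueRel θ (1, c) (x, u) := pmk_exact θ hθ hcv
        have h4 : θ (x⁻¹ * 1) c = some u := h3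
        rwa [mul_one] at h4
      have h4 : ∀ i, θ x (a' i) = some (a i) := fun i => by
        have := hθ.2.1 _ _ _ (h1 i); rwa [inv_inv] at this
      have h5 : θ x u = some c := by
        have := hθ.2.1 _ _ _ h2; rwa [inv_inv] at this
      have h6 := hyp x g a' a u h4 hF'
      rw [h6, h5]
    · intro x a b hab
      show pmk θ hθ (x * 1, a) = pmk θ hθ (1, b)
      apply pmk_sound
      show θ ((1:G)⁻¹ * (x * 1)) a = some b
      simpa using hab
    · intro x a
      constructor
      · intro hs
        obtain ⟨b, hb⟩ := Option.isSome_iff_exists.mp hs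
        refine ⟨b, ?_⟩
        show pmk θ hθ (1, b) = pmk θ hθ (x * 1, a)
        apply pmk_sound
        show θ ((x * 1)⁻¹ * 1) b = some a
        have := hθ.2.1 _ _ _ hb
        simpa using this
      · rintro ⟨b, hb⟩
        have hb' : pmk θ hθ (1, b) = pmk θ hθ (x * 1, a) := hb
        have hg : glueRel θ (1, b) (x * 1, a) := pmk_exact θ hθ hb'
        have h1 : θ ((x * 1)⁻¹ * 1) b = some a := hg
        rw [mul_one, mul_one] at h1
        have h2 := hθ.2.1 _ _ _ h1
        rw [inv_inv] at h2
        rw [h2]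
        rfl
end

section
/- Let θ be a partial action of a group G on a partial algebra 𝒜 such that each domain D_{x} is a subalgebra of 𝒜 (closed under all defined operations). Then for every operation f, all a₁,…,aₙ and x ∈ G: if f(a₁,…,aₙ) and x·a₁,…,x·aₙ are defined, then f(x·a₁,…,x·aₙ) and x·f(a₁,…,aₙ) are defined and equal. Consequently (θ,𝒜) admits a globalization in the category of global actions on partial algebras. -/
universe u

/-!
The globalization is the usual gluing `(G × A)/∼` with `(x, a) ∼ (y, b) ↔ θ(y⁻¹x, a) = b`, on
which `G` acts by left multiplication in the first coordinate and into which `A` embeds as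
`a ↦ [(1, a)]`. An operation is defined on a tuple `[(x, aᵢ)]` of classes sharing one group
coordinate, with value `[(x, f(a))]`. That this is independent of the representatives is
exactly the globalization criterion, and the criterion follows from closure of the domains:
closure makes `x·f(a)` defined, and then the partial action axiom identifies it with `f(x·a)`.
-/

theorem IsPartialAlgAction.exists_apply_op_eq {G γ A : Type u} [Group G] {n : γ → ℕ}
    {θ : G → A → Option A} {F : ∀ g, (Fin (n g) → A) → Option A}
    (h : IsPartialAlgAction n θ F)
    (hsub : ∀ (x : G) (g : γ) (a : Fin (n g) → A) (u : A),
      (∀ i, (θ x (a i)).isSome) → F g a = some u → (θ x u).isSome)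
    (x : G) (g : γ) (a b : Fin (n g) → A) (u : A)
    (hab : ∀ i, θ x (a i) = some (b i)) (hu : F g a = some u) :
    ∃ c, θ x u = some c ∧ F g b = some c := by
  obtain ⟨c, hc⟩ := Option.isSome_iff_exists.mp
    (hsub x g a u (fun i => by simp [hab i]) hu)
  exact ⟨c, hc, h.2 x g a b u c hab hu hc⟩

namespace IsPartialAction

section Gluing

variable {G A : Type u} [Group G] {θ : G → A → Option A} (hθ : IsPartialAction θ)

def glueSetoid : Setoid (G × A) where
  r := glueRel θ
  iseqv := by
    obtain ⟨h_one, h_inv, h_mul⟩ := hθ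
    refine ⟨fun p => ?_, fun {p q} hpq => ?_, fun {p q r} hpq hqr => ?_⟩
    · simpa [glueRel] using h_one p.2
    · simpa [glueRel] using h_inv _ _ _ hpq
    · simpa [glueRel, mul_assoc] using h_mul _ _ _ _ _ hpq hqr

abbrev Globalization : Type u := Quotient hθ.glueSetoid

variable {hθ}

theorem mk_eq_mk_iff {x y : G} {a b : A} :
    (Quotient.mk _ (x, a) : hθ.Globalization) = Quotient.mk _ (y, b) ↔
      θ (y⁻¹ * x) a = some b :=
  Quotient.eq

instance : MulAction G hθ.Globalization where
  smul x := Quotient.map (fun p => (x * p.1, p.2)) fun p q (hpq : glueRel θ p q) =>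
    show glueRel θ _ _ by simpa [glueRel, mul_assoc] using hpq
  one_smul := Quotient.ind fun p => congrArg (fun z => Quotient.mk _ (z, p.2)) (one_mul p.1)
  mul_smul x y := Quotient.ind fun p =>
    congrArg (fun z => Quotient.mk _ (z, p.2)) (mul_assoc x y p.1)

theorem smul_mk (x y : G) (a : A) :
    x • (Quotient.mk _ (y, a) : hθ.Globalization) = Quotient.mk _ (x * y, a) :=
  rfl

variable (hθ)

def embed (a : A) : hθ.Globalization :=
  Quotient.mk _ (1, a)

variable {hθ}

theorem smul_embed (x : G) (a : A) : x • hθ.embed a = Quotient.mk _ (x, a) := by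
  rw [embed, smul_mk, mul_one]

theorem mk_eq_embed_iff {x : G} {a b : A} :
    (Quotient.mk _ (x, a) : hθ.Globalization) = hθ.embed b ↔ θ x a = some b := by
  rw [embed, mk_eq_mk_iff, inv_one, one_mul]

theorem embed_injective : Function.Injective hθ.embed := fun a b hab => by
  rw [embed, mk_eq_embed_iff, hθ.1] at hab
  exact Option.some.inj hab

theorem smul_embed_mem_range_iff (x : G) (a : A) :
    x • hθ.embed a ∈ Set.range hθ.embed ↔ (θ x a).isSome := by
  simp only [smul_embed, Set.mem_range, eq_comm (b := Quotient.mk _ _), mk_eq_embed_iff,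
    Option.isSome_iff_exists]

end Gluing

section Operations

variable {G γ A : Type u} [Group G] {n : γ → ℕ} {θ : G → A → Option A}
  {hθ : IsPartialAction θ} (F : ∀ g, (Fin (n g) → A) → Option A)

variable (hθ) in
def GluedOpRel (g : γ) (b : Fin (n g) → hθ.Globalization) (v : hθ.Globalization) : Prop :=
  ∃ (x : G) (a : Fin (n g) → A) (u : A),
    (∀ i, b i = Quotient.mk _ (x, a i)) ∧ F g a = some u ∧ v = Quotient.mk _ (x, u)

variable (hθ) in
open Classical in
noncomputable def gluedOp (g : γ) (b : Fin (n g) → hθ.Globalization) :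
    Option hθ.Globalization :=
  if h : ∃ v, GluedOpRel hθ F g b v then some h.choose else none

variable {F}

theorem GluedOpRel.smul {g : γ} {b : Fin (n g) → hθ.Globalization} {v : hθ.Globalization}
    (hv : GluedOpRel hθ F g b v) (x : G) : GluedOpRel hθ F g (fun i => x • b i) (x • v) := by
  obtain ⟨y, a, u, hb, hu, rfl⟩ := hv
  exact ⟨x * y, a, u, fun i => by simp only [hb i, smul_mk], hu, rfl⟩

variable (hcrit : ∀ (x : G) (g : γ) (a b : Fin (n g) → A) (u : A),
  (∀ i, θ x (a i) = some (b i)) → F g a = some u → ∃ c, θ x u = some c ∧ F g b = some c)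
include hcrit

theorem GluedOpRel.unique {g : γ} {b : Fin (n g) → hθ.Globalization} {v w : hθ.Globalization}
    (hv : GluedOpRel hθ F g b v) (hw : GluedOpRel hθ F g b w) : v = w := by
  obtain ⟨x, a, u, hb, hu, rfl⟩ := hv
  obtain ⟨y, a', u', hb', hu', rfl⟩ := hw
  have hshift : ∀ i, θ (y⁻¹ * x) (a i) = some (a' i) := fun i =>
    mk_eq_mk_iff.mp ((hb i).symm.trans (hb' i))
  obtain ⟨c, hc, hc'⟩ := hcrit _ g a a' u hshift hu
  rw [hu', Option.some.injEq] at hc'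
  rw [mk_eq_mk_iff, hc, hc']

theorem gluedOp_eq_some_iff {g : γ} {b : Fin (n g) → hθ.Globalization}
    {v : hθ.Globalization} : gluedOp hθ F g b = some v ↔ GluedOpRel hθ F g b v := by
  unfold gluedOp
  split_ifs with h
  · exact ⟨fun hv => Option.some.inj hv ▸ h.choose_spec,
      fun hv => congrArg some (h.choose_spec.unique hcrit hv)⟩
  · exact ⟨nofun, fun hv => (h ⟨v, hv⟩).elim⟩

theorem gluedOp_smul (x : G) (g : γ) (b : Fin (n g) → hθ.Globalization) :
    gluedOp hθ F g (fun i => x • b i) = (gluedOp hθ F g b).map (x • ·) := by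
  rcases hb : gluedOp hθ F g b with _ | v
  · rcases hxb : gluedOp hθ F g (fun i => x • b i) with _ | w
    · rfl
    · have := ((gluedOp_eq_some_iff hcrit).mp hxb).smul x⁻¹
      simp only [inv_smul_smul] at this
      rw [(gluedOp_eq_some_iff hcrit).mpr this] at hb
      simp at hb
  · exact (gluedOp_eq_some_iff hcrit).mpr (((gluedOp_eq_some_iff hcrit).mp hb).smul x)

theorem hasPAlgGlobalization (hθ : IsPartialAction θ) : HasPAlgGlobalization n θ F := by
  refine ⟨hθ.Globalization, gluedOp hθ F, (· • ·), hθ.embed, one_smul G, smul_smul,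
    gluedOp_smul hcrit, embed_injective, fun g a u hu => ?_, fun g a c hc => ?_,
    fun x a b hab => by beta_reduce; rwa [smul_embed, mk_eq_embed_iff],
    fun x a => (smul_embed_mem_range_iff x a).symm⟩
  · exact (gluedOp_eq_some_iff hcrit).mpr ⟨1, a, u, fun i => rfl, hu, rfl⟩
  · obtain ⟨x, a', u, ha, hu, hc⟩ := (gluedOp_eq_some_iff hcrit).mp hc
    have ha' : ∀ i, θ x (a' i) = some (a i) := fun i => mk_eq_embed_iff.mp (ha i).symm
    obtain ⟨c', hc', hc'a⟩ := hcrit x g a' a u ha' hu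
    rwa [← Option.some.inj (hc'.symm.trans (mk_eq_embed_iff.mp hc.symm))]

end Operations

end IsPartialAction

/-- if each domain `D_{x⁻¹} = {a : x·a defined}` is a subalgebra (closed
under all defined operations), then whenever `f(a₁,…,aₙ)` and all `x·aᵢ` are defined,
both `f(x·a₁,…,x·aₙ)` and `x·f(a₁,…,aₙ)` are defined and equal; consequently
`(θ,𝒜)` admits a globalization. -/
theorem stmt_8 {G γ A : Type u} [Group G] (n : γ → ℕ)
    (θ : G → A → Option A) (F : ∀ g, (Fin (n g) → A) → Option A)
    (h : IsPartialAlgAction n θ F)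
    (hsub : ∀ (x : G) (g : γ) (a : Fin (n g) → A) (u : A),
      (∀ i, (θ x (a i)).isSome) → F g a = some u → (θ x u).isSome) :
    (∀ (x : G) (g : γ) (a b : Fin (n g) → A) (u : A),
      (∀ i, θ x (a i) = some (b i)) → F g a = some u →
      ∃ c, θ x u = some c ∧ F g b = some c) ∧
    HasPAlgGlobalization n θ F := by
  have hcrit := h.exists_apply_op_eq hsub
  exact ⟨hcrit, h.1.hasPAlgGlobalization hcrit⟩
end

section
/- Let θ be a partial action of a group G on a total algebra 𝒜 of type T which is a partial action on 𝒜 as a partial algebra. Then (θ,𝒜) has a globalization in the category of global actions on partial algebras if and only if each domain D_x is a subalgebra of 𝒜. -/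
universe u


namespace Stmt9Aux

variable {G A : Type u} [Group G]

def gSetoid (θ : G → A → Option A) (hp : IsPartialAction θ) : Setoid (G × A) where
  r := glueRel θ
  iseqv := by
    refine ⟨fun p => ?_, fun {p q} hpq => ?_, fun {p q r} hpq hqr => ?_⟩
    · show θ (p.1⁻¹ * p.1) p.2 = some p.2
      rw [inv_mul_cancel]; exact hp.1 p.2
    · have := hp.2.1 _ _ _ hpq
      show θ (p.1⁻¹ * q.1) q.2 = some p.2
      simpa [mul_inv_rev] using this
    · have := hp.2.2 _ _ _ _ _ hpq hqr
      show θ (r.1⁻¹ * p.1) p.2 = some r.2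
      simpa [mul_assoc] using this

def gB (θ : G → A → Option A) (hp : IsPartialAction θ) : Type u :=
  Quotient (gSetoid θ hp)

def gmk (θ : G → A → Option A) (hp : IsPartialAction θ) (p : G × A) : gB θ hp :=
  Quotient.mk (gSetoid θ hp) p

theorem gmk_exact {θ : G → A → Option A} {hp : IsPartialAction θ} {p q : G × A}
    (h : gmk θ hp p = gmk θ hp q) : θ (q.1⁻¹ * p.1) p.2 = some q.2 :=
  Quotient.exact h

theorem gmk_sound {θ : G → A → Option A} {hp : IsPartialAction θ} {p q : G × A}
    (h : θ (q.1⁻¹ * p.1) p.2 = some q.2) : gmk θ hp p = gmk θ hp q :=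
  Quotient.sound h

def gact (θ : G → A → Option A) (hp : IsPartialAction θ) (x : G) :
    gB θ hp → gB θ hp :=
  Quotient.map (fun p => (x * p.1, p.2)) (by
    intro p q hpq
    show θ ((x * q.1)⁻¹ * (x * p.1)) p.2 = some q.2
    have hpq' : θ (q.1⁻¹ * p.1) p.2 = some q.2 := hpq
    simpa [mul_inv_rev, mul_assoc] using hpq')

theorem gact_mk (θ : G → A → Option A) (hp : IsPartialAction θ) (x : G) (p : G × A) :
    gact θ hp x (gmk θ hp p) = gmk θ hp (x * p.1, p.2) :=
  rfl

variable {γ : Type u} (n : γ → ℕ)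

open scoped Classical in
noncomputable def gFB (θ : G → A → Option A) (hp : IsPartialAction θ)
    (F : ∀ g, (Fin (n g) → A) → A) (g : γ) (b : Fin (n g) → gB θ hp) :
    Option (gB θ hp) :=
  if hb : ∃ (y : G) (a : Fin (n g) → A), ∀ i, b i = gmk θ hp (y, a i)
  then some (gmk θ hp (hb.choose, F g hb.choose_spec.choose))
  else none

end Stmt9Aux

/-- for a partial action on a total algebra `(A, F)`, a globalization in
the category of global actions on partial algebras exists iff every domain
`D_{x⁻¹} = {a : x·a defined}` is a subalgebra of `A`. -/
theorem stmt_9 {G γ A : Type u} [Group G] (n : γ → ℕ)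
    (θ : G → A → Option A) (F : ∀ g, (Fin (n g) → A) → A)
    (h : IsPartialAlgAction n θ (fun g a => some (F g a))) :
    HasPAlgGlobalization n θ (fun g a => some (F g a)) ↔
      ∀ (x : G) (g : γ) (a : Fin (n g) → A),
        (∀ i, (θ x (a i)).isSome) → (θ x (F g a)).isSome := by
  constructor
  · rintro ⟨B, FB, act, ι, h1, hmul, heqv, hinj, hhom, hhom', hcompat, hdom⟩ x g a ha
    -- get the images b i
    have hb : ∀ i, θ x (a i) = some ((θ x (a i)).get (ha i)) := fun i =>
      (Option.some_get (ha i)).symm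
    have hact : ∀ i, act x (ι (a i)) = ι ((θ x (a i)).get (ha i)) := fun i =>
      hcompat x (a i) _ (hb i)
    have hFa : FB g (fun i => ι (a i)) = some (ι (F g a)) := hhom g a (F g a) rfl
    have hFb : FB g (fun i => ι ((θ x (a i)).get (ha i))) =
        some (ι (F g (fun i => (θ x (a i)).get (ha i)))) := hhom _ _ _ rfl
    have heq : FB g (fun i => act x (ι (a i))) = some (act x (ι (F g a))) := by
      rw [heqv x g (fun i => ι (a i)), hFa]; rfl
    have heq2 : FB g (fun i => act x (ι (a i))) =
        some (ι (F g (fun i => (θ x (a i)).get (ha i)))) := by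
      rw [show (fun i => act x (ι (a i))) = fun i => ι ((θ x (a i)).get (ha i)) from
        funext hact]
      exact hFb
    have : act x (ι (F g a)) = ι (F g (fun i => (θ x (a i)).get (ha i))) := by
      have := heq.symm.trans heq2
      exact Option.some_inj.mp this
    rw [hdom x (F g a)]
    exact ⟨_, this.symm⟩
  · intro hcl
    obtain ⟨hp, halg⟩ := h
    -- key closure lemma: θ x maps F g a to F g b
    have key : ∀ (x : G) (g : γ) (a b : Fin (n g) → A),
        (∀ i, θ x (a i) = some (b i)) → θ x (F g a) = some (F g b) := by
      intro x g a b hab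
      have hs1 : (θ x (F g a)).isSome := hcl x g a (fun i => by rw [hab i]; rfl)
      obtain ⟨u, hu⟩ := Option.isSome_iff_exists.mp hs1
      have h2 : some (F g b) = some u := halg x g a b (F g a) u hab rfl hu
      rw [hu, Option.some_inj.mp h2]
    -- well-definedness of the induced operation
    have wd : ∀ (g : γ) (y z : G) (a c : Fin (n g) → A),
        (∀ i, Stmt9Aux.gmk θ hp (y, a i) = Stmt9Aux.gmk θ hp (z, c i)) →
        Stmt9Aux.gmk θ hp (y, F g a) = Stmt9Aux.gmk θ hp (z, F g c) := by
      intro g y z a c hrep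
      exact Stmt9Aux.gmk_sound (key (z⁻¹ * y) g a c
        (fun i => Stmt9Aux.gmk_exact (hrep i)))
    have FB_spec : ∀ (g : γ) (b : Fin (n g) → Stmt9Aux.gB θ hp) (y : G)
        (a : Fin (n g) → A), (∀ i, b i = Stmt9Aux.gmk θ hp (y, a i)) →
        Stmt9Aux.gFB n θ hp F g b = some (Stmt9Aux.gmk θ hp (y, F g a)) := by
      intro g b y a hb
      have hex : ∃ (y : G) (a : Fin (n g) → A), ∀ i, b i = Stmt9Aux.gmk θ hp (y, a i) :=
        ⟨y, a, hb⟩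
      rw [Stmt9Aux.gFB, dif_pos hex]
      congr 1
      exact wd g _ y hex.choose_spec.choose a (fun i => by
        rw [← hex.choose_spec.choose_spec i, hb i])
    refine ⟨Stmt9Aux.gB θ hp, Stmt9Aux.gFB n θ hp F, Stmt9Aux.gact θ hp,
      fun a => Stmt9Aux.gmk θ hp (1, a), ?_, ?_, ?_, ?_, ?_, ?_, ?_, ?_⟩
    · intro b
      refine Quotient.inductionOn b (fun p => ?_)
      show Stmt9Aux.gmk θ hp (1 * p.1, p.2) = Stmt9Aux.gmk θ hp p
      rw [one_mul]
    · intro x y b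
      refine Quotient.inductionOn b (fun p => ?_)
      show Stmt9Aux.gmk θ hp (x * (y * p.1), p.2) = Stmt9Aux.gmk θ hp (x * y * p.1, p.2)
      rw [mul_assoc]
    · intro x g b
      by_cases hb : ∃ (y : G) (a : Fin (n g) → A), ∀ i, b i = Stmt9Aux.gmk θ hp (y, a i)
      · obtain ⟨y, a, hy⟩ := hb
        rw [FB_spec g b y a hy,
          FB_spec g (fun i => Stmt9Aux.gact θ hp x (b i)) (x * y) a
            (fun i => by simp only [hy i]; rfl)]
        rfl
      · have hb2 : ¬ ∃ (y : G) (a : Fin (n g) → A),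
            ∀ i, Stmt9Aux.gact θ hp x (b i) = Stmt9Aux.gmk θ hp (y, a i) := by
          rintro ⟨y, a, hy⟩
          refine hb ⟨x⁻¹ * y, a, fun i => ?_⟩
          have : Stmt9Aux.gact θ hp x⁻¹ (Stmt9Aux.gact θ hp x (b i)) =
              Stmt9Aux.gact θ hp x⁻¹ (Stmt9Aux.gmk θ hp (y, a i)) :=
            congrArg (Stmt9Aux.gact θ hp x⁻¹) (hy i)
          refine Quotient.inductionOn (b i) (fun p hyi this => ?_) (hy i) this
          calc Stmt9Aux.gmk θ hp p
              = Stmt9Aux.gmk θ hp (x⁻¹ * (x * p.1), p.2) := by rw [inv_mul_cancel_left]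
            _ = Stmt9Aux.gact θ hp x⁻¹ (Stmt9Aux.gact θ hp x (Stmt9Aux.gmk θ hp p)) := rfl
            _ = Stmt9Aux.gmk θ hp (x⁻¹ * y, a i) := this
        simp only [Stmt9Aux.gFB]
        rw [dif_neg hb, dif_neg hb2]
        rfl
    · intro a b hab
      have := Stmt9Aux.gmk_exact hab
      simp only [inv_one, one_mul] at this
      rw [hp.1] at this
      exact Option.some_inj.mp this
    · intro g a u hu
      rw [FB_spec g _ 1 a (fun i => rfl)]
      rw [Option.some_inj.mp hu]
    · intro g a c hc
      rw [FB_spec g _ 1 a (fun i => rfl)] at hc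
      have := Stmt9Aux.gmk_exact (Option.some_inj.mp hc)
      simp only [inv_one, one_mul] at this
      rw [hp.1] at this
      exact this
    · intro x a b hab
      refine Stmt9Aux.gmk_sound ?_
      simpa using hab
    · intro x a
      constructor
      · intro hs
        obtain ⟨b, hb⟩ := Option.isSome_iff_exists.mp hs
        refine ⟨b, ?_⟩
        exact (Stmt9Aux.gmk_sound (by simpa using hb)).symm
      · rintro ⟨c, hc⟩
        have := Stmt9Aux.gmk_exact hc.symm
        simp only [inv_one, one_mul, mul_one] at this
        rw [Option.isSome_iff_exists]
        exact ⟨c, this⟩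
end

section
/- Let A be a generalized amalgam of V-algebras and N the defining congruence of the amalgamated free product on the free V-algebra over ⊔Aᵢ. Then A is embeddable into a V-algebra if and only if for all i, j, a ∈ Aᵢ, b ∈ Aⱼ (viewed as generators of the free algebra): (a,b) ∈ N implies a ∈ Aᵢⱼ and αᵢⱼ(a) = b. -/
universe u

/-- The absolutely free (term) algebra of type `(γ, n)` over the set `A`. -/
inductive Term (γ : Type u) (n : γ → ℕ) (A : Type u) : Type u
  | var : A → Term γ n A
  | node : (g : γ) → (Fin (n g) → Term γ n A) → Term γ n A

/-- A congruence on the total algebra `(A, F)` of type `(γ, n)`. -/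
def IsAlgCong {γ A : Type u} {n : γ → ℕ} (F : ∀ g, (Fin (n g) → A) → A)
    (R : A → A → Prop) : Prop :=
  Equivalence R ∧
  ∀ (g : γ) (a b : Fin (n g) → A), (∀ i, R (a i) (b i)) → R (F g a) (F g b)

/-- The congruence on `(A, F)` generated by a binary relation `ρ`. -/
def algConGen {γ A : Type u} {n : γ → ℕ} (F : ∀ g, (Fin (n g) → A) → A)
    (ρ : A → A → Prop) : A → A → Prop :=
  fun a b => ∀ R, IsAlgCong F R → (∀ p q, ρ p q → R p q) → R a b

/-- The induced operations on the quotient of `(A, F)` by a congruence `R`. -/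
noncomputable def quotOp {γ A : Type u} {n : γ → ℕ} (F : ∀ g, (Fin (n g) → A) → A)
    (R : A → A → Prop) : ∀ g, (Fin (n g) → Quot R) → Quot R :=
  fun g c => Quot.mk R (F g (fun i => (c i).out))

/-- Evaluation of a term over variables `X` in the total algebra `(A, F)` under an
assignment `v : X → A`. -/
def evalT {γ A X : Type u} {n : γ → ℕ} (F : ∀ g, (Fin (n g) → A) → A)
    (v : X → A) : Term γ n X → A
  | .var x => v x
  | .node g w => F g (fun i => evalT F v (w i))

/-- `(A, F)` satisfies all identities in `E` (pairs of terms over variables `X`). -/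
def SatId {γ A X : Type u} {n : γ → ℕ} (F : ∀ g, (Fin (n g) → A) → A)
    (E : Set (Term γ n X × Term γ n X)) : Prop :=
  ∀ e ∈ E, ∀ v : X → A, evalT F v e.1 = evalT F v e.2

/-- The term algebra structure on `Term γ n Y`. -/
def termAlg (γ : Type u) (n : γ → ℕ) (Y : Type u) :
    ∀ g, (Fin (n g) → Term γ n Y) → Term γ n Y :=
  fun g w => Term.node g w

/-- All substitution instances (over `Y`) of the identities `E`. -/
def idInstances {γ X : Type u} {n : γ → ℕ} (E : Set (Term γ n X × Term γ n X))
    (Y : Type u) : Term γ n Y → Term γ n Y → Prop :=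
  fun p q => ∃ e ∈ E, ∃ v : X → Term γ n Y,
    p = evalT (termAlg γ n Y) v e.1 ∧ q = evalT (termAlg γ n Y) v e.2

/-- The fully invariant congruence defining the relatively free `V`-algebra over `Y`. -/
def freeRel {γ X : Type u} {n : γ → ℕ} (E : Set (Term γ n X × Term γ n X))
    (Y : Type u) : Term γ n Y → Term γ n Y → Prop :=
  algConGen (termAlg γ n Y) (idInstances E Y)

/-- The operations of the free `V`-algebra over `Y`. -/
noncomputable def freeVOp {γ X : Type u} {n : γ → ℕ} (E : Set (Term γ n X × Term γ n X))
    (Y : Type u) : ∀ g, (Fin (n g) → Quot (freeRel E Y)) → Quot (freeRel E Y) :=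
  quotOp (termAlg γ n Y) (freeRel E Y)

/-- A generalized amalgam of algebras of type `(γ, n)`: algebras `𝒜ᵢ`, subalgebras
`𝒜ᵢⱼ ⊆ 𝒜ᵢ` with `𝒜ᵢᵢ = 𝒜ᵢ`, and isomorphisms `αᵢⱼ : 𝒜ᵢⱼ → 𝒜ⱼᵢ` with
`αⱼᵢ = αᵢⱼ⁻¹` and `αᵢᵢ = id`. -/
structure Amalgam (γ : Type u) (n : γ → ℕ) (I : Type u) where
  A : I → Type u
  F : ∀ i, ∀ g, (Fin (n g) → A i) → A i
  S : ∀ i j, Set (A i)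
  α : ∀ i j, A i → A j
  S_self : ∀ i, S i i = Set.univ
  S_closed : ∀ i j (g : γ) (a : Fin (n g) → A i), (∀ k, a k ∈ S i j) → F i g a ∈ S i j
  α_mem : ∀ i j a, a ∈ S i j → α i j a ∈ S j i
  α_inv : ∀ i j a, a ∈ S i j → α j i (α i j a) = a
  α_self : ∀ i a, α i i a = a
  α_hom : ∀ i j (g : γ) (a : Fin (n g) → A i), (∀ k, a k ∈ S i j) →
    α i j (F i g a) = F j g (fun k => α i j (a k))

/-- The amalgam `M` embeds into the algebra `(B, FB)`: injective homomorphisms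
`φᵢ : 𝒜ᵢ → B` with `φⱼ ∘ αᵢⱼ = φᵢ` on `𝒜ᵢⱼ` and `φᵢ(Aᵢ) ∩ φⱼ(Aⱼ) = φᵢ(Aᵢⱼ)`. -/
def EmbedsInto {γ I B : Type u} {n : γ → ℕ} (M : Amalgam γ n I)
    (FB : ∀ g, (Fin (n g) → B) → B) : Prop :=
  ∃ φ : ∀ i, M.A i → B,
    (∀ i, Function.Injective (φ i)) ∧
    (∀ i (g : γ) (a : Fin (n g) → M.A i), φ i (M.F i g a) = FB g (fun k => φ i (a k))) ∧
    (∀ i j a, a ∈ M.S i j → φ j (M.α i j a) = φ i a) ∧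
    (∀ i j, Set.range (φ i) ∩ Set.range (φ j) = φ i '' M.S i j)

/-- The generating pairs of the congruence `N` defining the free product of the `𝒜ᵢ`
with amalgamated subalgebras: operation-evaluation pairs within each `𝒜ᵢ`, and the
amalgamation pairs `(a, αᵢⱼ(a))` for `a ∈ 𝒜ᵢⱼ`. -/
def genN {γ X I : Type u} {n : γ → ℕ} (E : Set (Term γ n X × Term γ n X))
    (M : Amalgam γ n I) :
    Quot (freeRel E (Σ i, M.A i)) → Quot (freeRel E (Σ i, M.A i)) → Prop :=
  fun p q =>
    (∃ (i : I) (g : γ) (a : Fin (n g) → M.A i),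
      p = Quot.mk _ (Term.node g (fun k => Term.var ⟨i, a k⟩)) ∧
      q = Quot.mk _ (Term.var ⟨i, M.F i g a⟩)) ∨
    (∃ (i j : I) (a : M.A i), a ∈ M.S i j ∧
      p = Quot.mk _ (Term.var ⟨i, a⟩) ∧ q = Quot.mk _ (Term.var ⟨j, M.α i j a⟩))

/-- The congruence `N` on the free `V`-algebra over `⊔ᵢ Aᵢ` defining the amalgamated
free product `∏*_{𝒜ᵢⱼ=𝒜ⱼᵢ} 𝒜ᵢ`. -/
noncomputable def relN {γ X I : Type u} {n : γ → ℕ} (E : Set (Term γ n X × Term γ n X))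
    (M : Amalgam γ n I) :
    Quot (freeRel E (Σ i, M.A i)) → Quot (freeRel E (Σ i, M.A i)) → Prop :=
  algConGen (freeVOp E (Σ i, M.A i)) (genN E M)


section Aux
variable {γ A X Y : Type u} {n : γ → ℕ}

lemma algConGen_isCong (F : ∀ g, (Fin (n g) → A) → A) (ρ : A → A → Prop) :
    IsAlgCong F (algConGen F ρ) := by
  constructor
  · constructor
    · intro a R hR _; exact hR.1.refl a
    · intro a b h R hR hρ; exact hR.1.symm (h R hR hρ)
    · intro a b c h1 h2 R hR hρ; exact hR.1.trans (h1 R hR hρ) (h2 R hR hρ)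
  · intro g a b h R hR hρ; exact hR.2 g a b (fun i => h i R hR hρ)

lemma algConGen_of (F : ∀ g, (Fin (n g) → A) → A) (ρ : A → A → Prop) {a b : A}
    (h : ρ a b) : algConGen F ρ a b := fun _ _ hρ => hρ _ _ h

lemma cong_exact {R : A → A → Prop} (hR : Equivalence R) {x y : A}
    (h : Quot.mk R x = Quot.mk R y) : R x y := by
  have h2 := Quot.eqvGen_exact h
  clear h
  induction h2 with
  | rel _ _ h => exact h
  | refl _ => exact hR.refl _
  | symm _ _ _ ih => exact hR.symm ih
  | trans _ _ _ _ _ ih1 ih2 => exact hR.trans ih1 ih2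

lemma quotOp_mk {F : ∀ g, (Fin (n g) → A) → A} {R : A → A → Prop}
    (hR : IsAlgCong F R) (g : γ) (a : Fin (n g) → A) :
    quotOp F R g (fun k => Quot.mk R (a k)) = Quot.mk R (F g a) := by
  apply Quot.sound
  exact hR.2 g _ _ (fun k => cong_exact hR.1 (Quot.out_eq _))

lemma evalT_quot {F : ∀ g, (Fin (n g) → A) → A} {R : A → A → Prop}
    (hR : IsAlgCong F R) (v : X → A) (t : Term γ n X) :
    evalT (quotOp F R) (fun x => Quot.mk R (v x)) t = Quot.mk R (evalT F v t) := by
  induction t with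
  | var x => rfl
  | node g w ih =>
    show quotOp F R g (fun i => evalT (quotOp F R) (fun x => Quot.mk R (v x)) (w i)) = _
    rw [funext ih]
    exact quotOp_mk hR g _

lemma evalT_subst (F : ∀ g, (Fin (n g) → A) → A)
    (v : Y → A) (u : X → Term γ n Y) (t : Term γ n X) :
    evalT F v (evalT (termAlg γ n Y) u t) = evalT F (fun x => evalT F v (u x)) t := by
  induction t with
  | var x => rfl
  | node g w ih => exact congrArg (F g) (funext ih)

lemma satId_quot {F : ∀ g, (Fin (n g) → A) → A} {R : A → A → Prop}
    (hR : IsAlgCong F R) {E : Set (Term γ n X × Term γ n X)}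
    (hE : ∀ e ∈ E, ∀ v : X → A, R (evalT F v e.1) (evalT F v e.2)) :
    SatId (quotOp F R) E := by
  intro e he v
  have hv : v = fun x => Quot.mk R ((v x).out) :=
    funext fun x => (Quot.out_eq _).symm
  rw [hv, evalT_quot hR, evalT_quot hR]
  exact Quot.sound (hE e he _)

lemma freeRel_isCong (E : Set (Term γ n X × Term γ n X)) (Y : Type u) :
    IsAlgCong (termAlg γ n Y) (freeRel E Y) :=
  algConGen_isCong _ _

lemma satId_freeV (E : Set (Term γ n X × Term γ n X)) (Y : Type u) :
    SatId (freeVOp E Y) E := by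
  apply satId_quot (freeRel_isCong E Y)
  intro e he v
  exact algConGen_of _ _ ⟨e, he, v, rfl, rfl⟩

end Aux

/-- an amalgam of `V`-algebras is embeddable into a `V`-algebra iff for
all `i, j`, `a ∈ Aᵢ`, `b ∈ Aⱼ` (viewed as generators of the free `V`-algebra over
`⊔ᵢ Aᵢ`): `(a,b) ∈ N` implies `a ∈ Aᵢⱼ` and `αᵢⱼ(a) = b`. -/
theorem stmt_16 {γ X I : Type u} {n : γ → ℕ}
    (E : Set (Term γ n X × Term γ n X)) (M : Amalgam γ n I)
    (hV : ∀ i, SatId (M.F i) E) :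
    (∃ (B : Type u) (FB : ∀ g, (Fin (n g) → B) → B), SatId FB E ∧ EmbedsInto M FB) ↔
    (∀ (i j : I) (a : M.A i) (b : M.A j),
      relN E M (Quot.mk (freeRel E (Σ i, M.A i)) (Term.var ⟨i, a⟩))
               (Quot.mk (freeRel E (Σ i, M.A i)) (Term.var ⟨j, b⟩)) →
      a ∈ M.S i j ∧ M.α i j a = b) := by
  constructor
  · rintro ⟨B, FB, hSat, φ, hinj, hhom, hcompat, hrange⟩ i j a b hN
    set Y := (Σ i, M.A i)
    set v : Y → B := fun x => φ x.1 x.2 with hv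
    -- lift evaluation to the quotient by freeRel
    have hlift : ∀ s t : Term γ n Y, freeRel E Y s t → evalT FB v s = evalT FB v t := by
      intro s t hst
      refine hst (fun p q => evalT FB v p = evalT FB v q)
        ⟨⟨fun _ => rfl, fun h => h.symm, fun h1 h2 => h1.trans h2⟩, ?_⟩ ?_
      · intro g p q h; exact congrArg (FB g) (funext h)
      · rintro p q ⟨e, he, u, rfl, rfl⟩
        rw [evalT_subst, evalT_subst]
        exact hSat e he _
    set evB : Quot (freeRel E Y) → B := Quot.lift (evalT FB v) hlift with hevB
    have hevmk : ∀ t, evB (Quot.mk (freeRel E Y) t) = evalT FB v t := fun _ => rfl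
    -- the kernel of evB is a congruence containing genN
    have key : evB (Quot.mk _ (Term.var ⟨i, a⟩)) = evB (Quot.mk _ (Term.var ⟨j, b⟩)) := by
      refine hN (fun p q => evB p = evB q)
        ⟨⟨fun _ => rfl, fun h => h.symm, fun h1 h2 => h1.trans h2⟩, ?_⟩ ?_
      · intro g c d h
        show evB (quotOp (termAlg γ n Y) (freeRel E Y) g c)
           = evB (quotOp (termAlg γ n Y) (freeRel E Y) g d)
        show evalT FB v (termAlg γ n Y g (fun k => (c k).out))
           = evalT FB v (termAlg γ n Y g (fun k => (d k).out))
        show FB g (fun k => evalT FB v ((c k).out)) = FB g (fun k => evalT FB v ((d k).out))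
        refine congrArg (FB g) (funext fun k => ?_)
        have h1 : evalT FB v ((c k).out) = evB (c k) := by
          rw [← hevmk ((c k).out), Quot.out_eq]
        have h2 : evalT FB v ((d k).out) = evB (d k) := by
          rw [← hevmk ((d k).out), Quot.out_eq]
        rw [h1, h2]; exact h k
      · rintro p q (⟨i', g, a', rfl, rfl⟩ | ⟨i', j', a', ha', rfl, rfl⟩)
        · show FB g (fun k => v ⟨i', a' k⟩) = v ⟨i', M.F i' g a'⟩
          exact (hhom i' g a').symm
        · exact (hcompat i' j' a' ha').symm
    -- key : φ i a = φ j b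
    have hkey : φ i a = φ j b := key
    have hmem : φ i a ∈ φ i '' M.S i j := by
      rw [← hrange i j]
      exact ⟨⟨a, rfl⟩, ⟨b, hkey.symm⟩⟩
    obtain ⟨a', ha', haa⟩ := hmem
    have haS : a ∈ M.S i j := by rwa [hinj i haa] at ha'
    refine ⟨haS, hinj j ?_⟩
    rw [hcompat i j a haS, hkey]
  · intro hcond
    set Y := (Σ i, M.A i)
    have hNcong : IsAlgCong (freeVOp E Y) (relN E M) := algConGen_isCong _ _
    refine ⟨Quot (relN E M), quotOp (freeVOp E Y) (relN E M), ?_, ?_⟩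
    · apply satId_quot hNcong
      intro e he w
      have := satId_freeV E Y e he w
      rw [this]
      exact hNcong.1.refl _
    · set φ : ∀ i, M.A i → Quot (relN E M) := fun i a =>
        Quot.mk _ (Quot.mk (freeRel E Y) (Term.var ⟨i, a⟩)) with hφ
      have hexact : ∀ i j (a : M.A i) (b : M.A j), φ i a = φ j b →
          a ∈ M.S i j ∧ M.α i j a = b := by
        intro i j a b h
        exact hcond i j a b (cong_exact hNcong.1 h)
      have hcompat : ∀ i j a, a ∈ M.S i j → φ j (M.α i j a) = φ i a := by
        intro i j a ha
        exact (Quot.sound (algConGen_of _ (genN E M) (Or.inr ⟨i, j, a, ha, rfl, rfl⟩))).symm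
      refine ⟨φ, ?_, ?_, hcompat, ?_⟩
      · intro i a a' h
        obtain ⟨hS, hα⟩ := hexact i i a a' h
        rw [← hα, M.α_self]
      · intro i g a
        have h1 : (fun k => φ i (a k)) = fun k =>
            Quot.mk (relN E M) (Quot.mk (freeRel E Y) (Term.var ⟨i, a k⟩)) := rfl
        rw [h1, quotOp_mk hNcong]
        have h2 : freeVOp E Y g (fun k => Quot.mk (freeRel E Y) (Term.var ⟨i, a k⟩))
            = Quot.mk (freeRel E Y) (Term.node g (fun k => Term.var ⟨i, a k⟩)) :=
          quotOp_mk (freeRel_isCong E Y) g _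
        rw [h2]
        exact (Quot.sound (algConGen_of _ (genN E M) (Or.inl ⟨i, g, a, rfl, rfl⟩))).symm
      · intro i j
        apply Set.Subset.antisymm
        · rintro x ⟨⟨a, rfl⟩, ⟨b, hb⟩⟩
          obtain ⟨hS, _⟩ := hexact i j a b hb.symm
          exact ⟨a, hS, rfl⟩
        · rintro x ⟨a, ha, rfl⟩
          exact ⟨⟨a, rfl⟩, ⟨M.α i j a, hcompat i j a ha⟩⟩
end

section
/- Let θ be a partial action of a group G on a semigroup S such that each domain D_x is a (two-sided) ideal of S and each θₓ : D_{x⁻¹} → D_x is a semigroup isomorphism. Then (θ,S) admits a globalization in the category of global actions of G on semigroups if and only if for all x ∈ G, u ∈ D_x and s,t ∈ S: θ(x, θ(x⁻¹, s·u)·t) = s · θ(x, θ(x⁻¹, u)·t). (Note all expressions are defined since D_x, D_{x⁻¹} are ideals.) -/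
universe u

/-- The domain `D_x = ran θₓ = dom θ_{x⁻¹}` of a partial action. -/
def paDom {G S : Type u} [Group G] (θ : G → S → Option S) (x : G) : Set S :=
  {s | (θ x⁻¹ s).isSome}

/-- A partial action of `G` on the semigroup `S` whose domains `D_x` are two-sided
ideals and whose partial bijections `θₓ : D_{x⁻¹} → D_x` are semigroup isomorphisms. -/
def IsIdealPartialAction {G S : Type u} [Group G] [Semigroup S]
    (θ : G → S → Option S) : Prop :=
  IsPartialAction θ ∧
  (∀ (x : G) (s t : S), s ∈ paDom θ x → s * t ∈ paDom θ x ∧ t * s ∈ paDom θ x) ∧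
  (∀ (x : G) (a b u v : S),
    θ x a = some u → θ x b = some v → θ x (a * b) = some (u * v))

/-- `(θ, S)` admits a globalization in the category of global actions of `G` on
semigroups: a semigroup `T` with a global action of `G` by automorphisms and an
injective homomorphism `ι : S → T` such that `θ(x,a)` is defined iff
`x·ι(a) ∈ ι(S)`. -/
def HasSemigroupGlobalization {G S : Type u} [Group G] [Semigroup S]
    (θ : G → S → Option S) : Prop :=
  ∃ (T : Type u) (mul : T → T → T) (act : G → T → T) (ι : S → T),
    (∀ a b c, mul (mul a b) c = mul a (mul b c)) ∧
    (∀ t, act 1 t = t) ∧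
    (∀ x y t, act x (act y t) = act (x * y) t) ∧
    (∀ (x : G) (a b : T), act x (mul a b) = mul (act x a) (act x b)) ∧
    Function.Injective ι ∧
    (∀ a b : S, ι (a * b) = mul (ι a) (ι b)) ∧
    (∀ x a b, θ x a = some b → act x (ι a) = ι b) ∧
    (∀ (x : G) (a : S), (θ x a).isSome ↔ act x (ι a) ∈ Set.range ι)

/-- The condition `x(x⁻¹(su)t) = s·x(x⁻¹(u)t)` for all `x ∈ G`, `u ∈ D_x`, `s,t ∈ S`
(all expressions being defined since the domains are ideals). -/
def SemGlobCond {G S : Type u} [Group G] [Semigroup S]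
    (θ : G → S → Option S) : Prop :=
  ∀ (x : G) (u s t a b c d : S),
    θ x⁻¹ (s * u) = some a → θ x (a * t) = some b →
    θ x⁻¹ u = some c → θ x (c * t) = some d → b = s * d

section Construction
open scoped Classical

variable {G S : Type u} [Group G] [Semigroup S]

lemma pa_comp' {θ : G → S → Option S} (h : IsPartialAction θ) {x : G} {a b : S}
    (hab : θ x a = some b) (g : G) : θ g b = θ (g * x) a := by
  obtain ⟨h1, h2, h3⟩ := h
  cases e1 : θ g b with
  | some c => exact (h3 g x a b c hab e1).symm
  | none =>
    cases e2 : θ (g * x) a with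
    | none => rfl
    | some c =>
      have hba := h2 x a b hab
      have : θ (g * x * x⁻¹) b = some c := h3 (g * x) x⁻¹ b a c hba e2
      rw [mul_inv_cancel_right] at this
      rw [e1] at this; cases this

def glueSetoid (θ : G → S → Option S) (h : IsPartialAction θ) : Setoid (G × S) where
  r := glueRel θ
  iseqv := by
    obtain ⟨h1, h2, h3⟩ := h
    refine ⟨fun p => ?_, fun {p q} hpq => ?_, fun {p q r} hpq hqr => ?_⟩
    · show θ (p.1⁻¹ * p.1) p.2 = some p.2
      rw [inv_mul_cancel]; exact h1 p.2
    · show θ (p.1⁻¹ * q.1) q.2 = some p.2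
      have := h2 _ _ _ hpq
      rwa [mul_inv_rev, inv_inv] at this
    · show θ (r.1⁻¹ * p.1) p.2 = some r.2
      have := h3 (r.1⁻¹ * q.1) (q.1⁻¹ * p.1) p.2 q.2 r.2 hpq hqr
      rwa [mul_assoc, mul_inv_cancel_left] at this

variable (θ : G → S → Option S) (hpa : IsIdealPartialAction θ)

def Lam : Type u := Quotient (glueSetoid θ hpa.1)

def mkΛ (p : G × S) : Lam θ hpa := Quotient.mk (glueSetoid θ hpa.1) p

noncomputable def inChart (z : G) (p : Lam θ hpa) : Option S :=
  Quotient.lift (fun p : G × S => θ (z⁻¹ * p.1) p.2)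
    (by
      intro p q hpq
      exact ((pa_comp' hpa.1 hpq (z⁻¹ * q.1)).trans
        (by rw [mul_assoc, mul_inv_cancel_left])).symm) p

lemma mkΛ_eq_of {p q : G × S} (hpq : glueRel θ p q) : mkΛ θ hpa p = mkΛ θ hpa q := by
  show Quotient.mk _ _ = Quotient.mk _ _
  exact Quotient.sound hpq

lemma inChart_mk (z : G) (p : G × S) : inChart θ hpa z (mkΛ θ hpa p) = θ (z⁻¹ * p.1) p.2 := rfl

lemma inChart_self (x : G) (a : S) : inChart θ hpa x (mkΛ θ hpa (x, a)) = some a := by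
  rw [inChart_mk, inv_mul_cancel]; exact hpa.1.1 a

lemma inChart_eq_some {z : G} {p : Lam θ hpa} {c : S} (hc : inChart θ hpa z p = some c) :
    p = mkΛ θ hpa (z, c) := by
  induction p using Quotient.ind with
  | _ q => exact Quotient.sound hc

def Mergeable (p q : Lam θ hpa) : Prop :=
  ∃ z, (inChart θ hpa z p).isSome ∧ (inChart θ hpa z q).isSome

noncomputable def mergeCls {p q : Lam θ hpa} (h : Mergeable θ hpa p q) : Lam θ hpa :=
  mkΛ θ hpa (h.choose,
    ((inChart θ hpa h.choose p).get h.choose_spec.1) *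
    ((inChart θ hpa h.choose q).get h.choose_spec.2))

lemma mergeCls_eq {p q : Lam θ hpa} (h : Mergeable θ hpa p q) {z : G} {c d : S}
    (hc : inChart θ hpa z p = some c) (hd : inChart θ hpa z q = some d) :
    mergeCls θ hpa h = mkΛ θ hpa (z, c * d) := by
  have hc0 : inChart θ hpa h.choose p = some ((inChart θ hpa h.choose p).get h.choose_spec.1) :=
    (Option.some_get _).symm
  have hd0 : inChart θ hpa h.choose q = some ((inChart θ hpa h.choose q).get h.choose_spec.2) :=
    (Option.some_get _).symm
  have hpz : mkΛ θ hpa (z, c) = mkΛ θ hpa (h.choose, _) :=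
    (inChart_eq_some θ hpa hc).symm.trans (inChart_eq_some θ hpa hc0)
  have hqz : mkΛ θ hpa (z, d) = mkΛ θ hpa (h.choose, _) :=
    (inChart_eq_some θ hpa hd).symm.trans (inChart_eq_some θ hpa hd0)
  have hcc : θ (h.choose⁻¹ * z) c = some _ := Quotient.exact hpz
  have hdd : θ (h.choose⁻¹ * z) d = some _ := Quotient.exact hqz
  have hmul := hpa.2.2 _ _ _ _ _ hcc hdd
  have hsym := hpa.1.2.1 _ _ _ hmul
  rw [mul_inv_rev, inv_inv] at hsym
  show Quotient.mk (glueSetoid θ hpa.1) _ = Quotient.mk (glueSetoid θ hpa.1) (z, c * d)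
  exact Quotient.sound hsym

noncomputable def pushL : Lam θ hpa → List (Lam θ hpa) → List (Lam θ hpa)
  | p, [] => [p]
  | p, q :: rest =>
      if hm : Mergeable θ hpa p q then pushL (mergeCls θ hpa hm) rest
      else p :: q :: rest

lemma pushL_nil (p : Lam θ hpa) : pushL θ hpa p [] = [p] := rfl

lemma pushL_cons (p q : Lam θ hpa) (rest : List (Lam θ hpa)) :
    pushL θ hpa p (q :: rest) =
      if hm : Mergeable θ hpa p q then pushL θ hpa (mergeCls θ hpa hm) rest
      else p :: q :: rest := rfl

lemma mergeable_spec {p q : Lam θ hpa} (h : Mergeable θ hpa p q) :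
    ∃ z c d, inChart θ hpa z p = some c ∧ inChart θ hpa z q = some d :=
  ⟨h.choose, _, _, (Option.some_get h.choose_spec.1).symm,
    (Option.some_get h.choose_spec.2).symm⟩

include hpa in
lemma ideal_left {g : G} {b : S} (hg : (θ g b).isSome) (a : S) : (θ g (a * b)).isSome := by
  have hmem : b ∈ paDom θ g⁻¹ := by simpa [paDom, inv_inv] using hg
  have := (hpa.2.1 g⁻¹ b a hmem).2
  simpa [paDom, inv_inv] using this

include hpa in
lemma ideal_right {g : G} {b : S} (hg : (θ g b).isSome) (a : S) : (θ g (b * a)).isSome := by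
  have hmem : b ∈ paDom θ g⁻¹ := by simpa [paDom, inv_inv] using hg
  have := (hpa.2.1 g⁻¹ b a hmem).1
  simpa [paDom, inv_inv] using this

include hpa in
lemma pushL_push (hsg : SemGlobCond θ) (x : G) :
    ∀ (w : List (Lam θ hpa)) (a b : S),
      pushL θ hpa (mkΛ θ hpa (x, a)) (pushL θ hpa (mkΛ θ hpa (x, b)) w) =
        pushL θ hpa (mkΛ θ hpa (x, a * b)) w := by
  intro w
  induction w with
  | nil =>
    intro a b
    have hm : Mergeable θ hpa (mkΛ θ hpa (x, a)) (mkΛ θ hpa (x, b)) :=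
      ⟨x, by rw [inChart_self]; rfl, by rw [inChart_self]; rfl⟩
    rw [pushL_nil, pushL_nil, pushL_cons, dif_pos hm,
      mergeCls_eq θ hpa hm (inChart_self θ hpa x a) (inChart_self θ hpa x b), pushL_nil]
  | cons q rest IH =>
    intro a b
    by_cases h1 : Mergeable θ hpa (mkΛ θ hpa (x, b)) q
    · obtain ⟨z, c, d, hc, hd⟩ := mergeable_spec θ hpa h1
      have hcb : θ (z⁻¹ * x) b = some c := hc
      have hbc : θ (z⁻¹ * x)⁻¹ c = some b := hpa.1.2.1 _ _ _ hcb
      have hinv : (z⁻¹ * x)⁻¹ = x⁻¹ * z := by rw [mul_inv_rev, inv_inv]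
      have hinv2 : (x⁻¹ * z)⁻¹ = z⁻¹ * x := by rw [mul_inv_rev, inv_inv]
      -- f := θ (x⁻¹z) (c*d)
      have hcdIs : (θ (x⁻¹ * z) (c * d)).isSome := by
        rw [← hinv]; exact ideal_right θ hpa (by rw [hbc]; rfl) d
      obtain ⟨f, hf⟩ := Option.isSome_iff_exists.mp hcdIs
      -- e := θ (z⁻¹x) (a*b)
      have habIs : (θ (z⁻¹ * x) (a * b)).isSome :=
        ideal_left θ hpa (by rw [hcb]; rfl) a
      obtain ⟨e, he⟩ := Option.isSome_iff_exists.mp habIs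
      have heb : θ (x⁻¹ * z) e = some (a * b) := by
        rw [← hinv]; exact hpa.1.2.1 _ _ _ he
      have hedIs : (θ (x⁻¹ * z) (e * d)).isSome := by
        rw [← hinv]
        exact ideal_right θ hpa (by rw [hinv, heb]; rfl) d
      obtain ⟨b1, hb1⟩ := Option.isSome_iff_exists.mp hedIs
      -- the globalization condition
      have hstar : b1 = a * f := by
        refine hsg (x⁻¹ * z) b a d e b1 c f ?_ hb1 ?_ hf
        · rw [hinv2]; exact he
        · rw [hinv2]; exact hcb
      -- class equalities
      have hclass1 : mkΛ θ hpa (z, c * d) = mkΛ θ hpa (x, f) :=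
        Quotient.sound (hf : glueRel θ (z, c * d) (x, f))
      have hafed : θ (z⁻¹ * x) (a * f) = some (e * d) := by
        have := hpa.1.2.1 _ _ _ (hstar ▸ hb1)
        rwa [hinv2] at this
      have hclass2 : mkΛ θ hpa (x, a * f) = mkΛ θ hpa (z, e * d) :=
        Quotient.sound (hafed : glueRel θ (x, a * f) (z, e * d))
      have h2 : Mergeable θ hpa (mkΛ θ hpa (x, a * b)) q :=
        ⟨z, by rw [inChart_mk]; simp only [he]; rfl, by rw [hd]; rfl⟩
      rw [pushL_cons, dif_pos h1, mergeCls_eq θ hpa h1 hc hd, hclass1, IH,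
        pushL_cons, dif_pos h2, mergeCls_eq θ hpa h2 (by rw [inChart_mk]; exact he) hd,
        hclass2]
    · have hm : Mergeable θ hpa (mkΛ θ hpa (x, a)) (mkΛ θ hpa (x, b)) :=
        ⟨x, by rw [inChart_self]; rfl, by rw [inChart_self]; rfl⟩
      rw [pushL_cons (θ := θ) (hpa := hpa) (mkΛ θ hpa (x, b)) q rest, dif_neg h1,
        pushL_cons, dif_pos hm,
        mergeCls_eq θ hpa hm (inChart_self θ hpa x a) (inChart_self θ hpa x b)]

def trΛ (g : G) : Lam θ hpa → Lam θ hpa :=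
  Quotient.map (fun p : G × S => (g * p.1, p.2))
    (by
      intro p q hpq
      show θ ((g * q.1)⁻¹ * (g * p.1)) p.2 = some q.2
      rwa [mul_inv_rev, mul_assoc, inv_mul_cancel_left])

lemma trΛ_mk (g : G) (p : G × S) :
    trΛ θ hpa g (mkΛ θ hpa p) = mkΛ θ hpa (g * p.1, p.2) := rfl

lemma trΛ_trΛ (g g' : G) (p : Lam θ hpa) :
    trΛ θ hpa g (trΛ θ hpa g' p) = trΛ θ hpa (g * g') p := by
  induction p using Quotient.ind with
  | _ r => show mkΛ θ hpa (g * (g' * r.1), r.2) = mkΛ θ hpa (g * g' * r.1, r.2)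
           rw [mul_assoc]

lemma trΛ_one (p : Lam θ hpa) : trΛ θ hpa 1 p = p := by
  induction p using Quotient.ind with
  | _ r => show mkΛ θ hpa (1 * r.1, r.2) = mkΛ θ hpa (r.1, r.2)
           rw [one_mul]

lemma inChart_tr (g z : G) (p : Lam θ hpa) :
    inChart θ hpa z (trΛ θ hpa g p) = inChart θ hpa (g⁻¹ * z) p := by
  induction p using Quotient.ind with
  | _ r =>
    show θ (z⁻¹ * (g * r.1)) r.2 = θ ((g⁻¹ * z)⁻¹ * r.1) r.2
    rw [mul_inv_rev, inv_inv, ← mul_assoc]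

lemma merge_tr {g : G} {p q : Lam θ hpa} :
    Mergeable θ hpa (trΛ θ hpa g p) (trΛ θ hpa g q) ↔ Mergeable θ hpa p q := by
  constructor
  · rintro ⟨z, h1, h2⟩
    rw [inChart_tr] at h1 h2
    exact ⟨g⁻¹ * z, h1, h2⟩
  · rintro ⟨z, h1, h2⟩
    refine ⟨g * z, ?_, ?_⟩ <;> rw [inChart_tr, inv_mul_cancel_left] <;> assumption

lemma pushL_tr (g : G) :
    ∀ (w : List (Lam θ hpa)) (p : Lam θ hpa),
      pushL θ hpa (trΛ θ hpa g p) (w.map (trΛ θ hpa g)) =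
        (pushL θ hpa p w).map (trΛ θ hpa g) := by
  intro w
  induction w with
  | nil => intro p; rfl
  | cons q rest IH =>
    intro p
    by_cases hm : Mergeable θ hpa p q
    · have hm' : Mergeable θ hpa (trΛ θ hpa g p) (trΛ θ hpa g q) := merge_tr θ hpa |>.mpr hm
      obtain ⟨z, c, d, hc, hd⟩ := mergeable_spec θ hpa hm
      have hc' : inChart θ hpa (g * z) (trΛ θ hpa g p) = some c := by
        rw [inChart_tr, inv_mul_cancel_left]; exact hc
      have hd' : inChart θ hpa (g * z) (trΛ θ hpa g q) = some d := by
        rw [inChart_tr, inv_mul_cancel_left]; exact hd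
      rw [List.map_cons, pushL_cons, dif_pos hm', mergeCls_eq θ hpa hm' hc' hd',
        pushL_cons, dif_pos hm, mergeCls_eq θ hpa hm hc hd]
      have := IH (mkΛ θ hpa (z, c * d))
      rwa [trΛ_mk] at this
    · have hm' : ¬ Mergeable θ hpa (trΛ θ hpa g p) (trΛ θ hpa g q) :=
        fun hh => hm ((merge_tr θ hpa).mp hh)
      rw [List.map_cons, pushL_cons, dif_neg hm', pushL_cons, dif_neg hm,
        List.map_cons, List.map_cons]

def tauL (g : G) : List (Lam θ hpa) → List (Lam θ hpa) := List.map (trΛ θ hpa g)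

lemma tauL_tauL (g g' : G) (w : List (Lam θ hpa)) :
    tauL θ hpa g (tauL θ hpa g' w) = tauL θ hpa (g * g') w := by
  simp only [tauL, List.map_map]
  congr 1
  funext p
  exact trΛ_trΛ θ hpa g g' p

lemma tauL_one (w : List (Lam θ hpa)) : tauL θ hpa 1 w = w := by
  simp only [tauL]
  rw [show trΛ θ hpa 1 = id from funext (trΛ_one θ hpa), List.map_id]

lemma conj_push (g x : G) (a : S) :
    tauL θ hpa g ∘ pushL θ hpa (mkΛ θ hpa (x, a)) ∘ tauL θ hpa g⁻¹ =
      pushL θ hpa (mkΛ θ hpa (g * x, a)) := by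
  funext w
  have h1 := pushL_tr θ hpa g (tauL θ hpa g⁻¹ w) (mkΛ θ hpa (x, a))
  rw [trΛ_mk] at h1
  have h2 : (tauL θ hpa g⁻¹ w).map (trΛ θ hpa g) = w := by
    show tauL θ hpa g (tauL θ hpa g⁻¹ w) = w
    rw [tauL_tauL, mul_inv_cancel, tauL_one]
  rw [h2] at h1
  exact h1.symm

inductive IsGen : (List (Lam θ hpa) → List (Lam θ hpa)) → Prop
  | basic (p : G × S) : IsGen (pushL θ hpa (mkΛ θ hpa p))
  | comp {f₁ f₂ : List (Lam θ hpa) → List (Lam θ hpa)} :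
      IsGen f₁ → IsGen f₂ → IsGen (f₁ ∘ f₂)

lemma isGen_conj (g : G) {f : List (Lam θ hpa) → List (Lam θ hpa)}
    (hf : IsGen θ hpa f) : IsGen θ hpa (tauL θ hpa g ∘ f ∘ tauL θ hpa g⁻¹) := by
  induction hf with
  | basic p =>
    obtain ⟨x, a⟩ := p
    rw [conj_push]
    exact .basic (g * x, a)
  | @comp f₁ f₂ h1 h2 IH1 IH2 =>
    have key : tauL θ hpa g ∘ (f₁ ∘ f₂) ∘ tauL θ hpa g⁻¹
        = (tauL θ hpa g ∘ f₁ ∘ tauL θ hpa g⁻¹) ∘ (tauL θ hpa g ∘ f₂ ∘ tauL θ hpa g⁻¹) := by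
      funext w
      show tauL θ hpa g (f₁ (f₂ (tauL θ hpa g⁻¹ w)))
        = tauL θ hpa g (f₁ (tauL θ hpa g⁻¹ (tauL θ hpa g (f₂ (tauL θ hpa g⁻¹ w)))))
      rw [tauL_tauL, inv_mul_cancel, tauL_one]
    rw [key]
    exact .comp IH1 IH2

end Construction

/-- a partial action of `G` on a semigroup `S` whose domains are ideals
admits a globalization iff `x(x⁻¹(su)t) = s·x(x⁻¹(u)t)` for all `x ∈ G`, `u ∈ D_x`
and `s,t ∈ S`. -/
theorem stmt_17 {G S : Type u} [Group G] [Semigroup S]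
    (θ : G → S → Option S) (h : IsIdealPartialAction θ) :
    HasSemigroupGlobalization θ ↔ SemGlobCond θ := by
  constructor
  · rintro ⟨T, mul, act, ι, hassoc, hone, hcomp, hdist, hinj, hhom, hint, hrange⟩
    intro x u s t a b c d h1 h2 h3 h4
    have e1 : act x (ι a) = ι (s * u) := by
      rw [← hint _ _ _ h1, hcomp, mul_inv_cancel, hone]
    have e3 : act x (ι c) = ι u := by
      rw [← hint _ _ _ h3, hcomp, mul_inv_cancel, hone]
    have e2 : act x (ι (a * t)) = ι b := hint _ _ _ h2
    have e4 : act x (ι (c * t)) = ι d := hint _ _ _ h4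
    apply hinj
    calc ι b = act x (ι (a * t)) := e2.symm
      _ = mul (act x (ι a)) (act x (ι t)) := by rw [hhom, hdist]
      _ = mul (mul (ι s) (ι u)) (act x (ι t)) := by rw [e1, hhom]
      _ = mul (ι s) (mul (ι u) (act x (ι t))) := hassoc _ _ _
      _ = mul (ι s) (mul (act x (ι c)) (act x (ι t))) := by rw [e3]
      _ = mul (ι s) (act x (ι (c * t))) := by rw [← hdist, ← hhom]
      _ = mul (ι s) (ι d) := by rw [e4]
      _ = ι (s * d) := (hhom s d).symm
  · intro hsg
    refine ⟨{f : List (Lam θ h) → List (Lam θ h) // IsGen θ h f},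
      fun f g => ⟨f.1 ∘ g.1, .comp f.2 g.2⟩,
      fun g f => ⟨tauL θ h g ∘ f.1 ∘ tauL θ h g⁻¹, isGen_conj θ h g f.2⟩,
      fun a => ⟨pushL θ h (mkΛ θ h (1, a)), .basic (1, a)⟩,
      ?_, ?_, ?_, ?_, ?_, ?_, ?_, ?_⟩
    · intro a b c
      exact Subtype.ext rfl
    · intro t
      apply Subtype.ext
      funext w
      show tauL θ h 1 (t.1 (tauL θ h 1⁻¹ w)) = t.1 w
      rw [inv_one, tauL_one, tauL_one]
    · intro x y t
      apply Subtype.ext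
      funext w
      show tauL θ h x (tauL θ h y (t.1 (tauL θ h y⁻¹ (tauL θ h x⁻¹ w))))
        = tauL θ h (x * y) (t.1 (tauL θ h (x * y)⁻¹ w))
      rw [tauL_tauL, tauL_tauL, mul_inv_rev]
    · intro x a b
      apply Subtype.ext
      funext w
      show tauL θ h x (a.1 (b.1 (tauL θ h x⁻¹ w)))
        = tauL θ h x (a.1 (tauL θ h x⁻¹ (tauL θ h x (b.1 (tauL θ h x⁻¹ w)))))
      rw [tauL_tauL, inv_mul_cancel, tauL_one]
    · intro a b hab
      have hthis : pushL θ h (mkΛ θ h (1, a)) [] = pushL θ h (mkΛ θ h (1, b)) [] :=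
        congrFun (congrArg Subtype.val hab) []
      rw [pushL_nil, pushL_nil] at hthis
      have hq : mkΛ θ h (1, a) = mkΛ θ h (1, b) := List.head_eq_of_cons_eq hthis
      have hg : θ ((1 : G)⁻¹ * 1) a = some b := Quotient.exact hq
      rw [inv_one, one_mul, h.1.1 a] at hg
      exact Option.some.inj hg
    · intro a b
      apply Subtype.ext
      funext w
      exact (pushL_push θ h hsg 1 w a b).symm
    · intro x a b hab
      apply Subtype.ext
      show tauL θ h x ∘ pushL θ h (mkΛ θ h (1, a)) ∘ tauL θ h x⁻¹ = pushL θ h (mkΛ θ h (1, b))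
      rw [conj_push, mul_one]
      exact congrArg _ (mkΛ_eq_of θ h (p := (x, a)) (q := (1, b)) (by show θ ((1 : G)⁻¹ * x) a = some b; rwa [inv_one, one_mul]))
    · intro x a
      constructor
      · intro hs
        obtain ⟨b, hb⟩ := Option.isSome_iff_exists.mp hs
        refine ⟨b, ?_⟩
        apply Subtype.ext
        show pushL θ h (mkΛ θ h (1, b))
          = tauL θ h x ∘ pushL θ h (mkΛ θ h (1, a)) ∘ tauL θ h x⁻¹
        rw [conj_push, mul_one]
        exact congrArg _ (mkΛ_eq_of θ h (p := (x, a)) (q := (1, b)) (by show θ ((1 : G)⁻¹ * x) a = some b; rwa [inv_one, one_mul])).symm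
      · rintro ⟨b, hb⟩
        have hval : pushL θ h (mkΛ θ h (1, b))
            = tauL θ h x ∘ pushL θ h (mkΛ θ h (1, a)) ∘ tauL θ h x⁻¹ :=
          congrArg Subtype.val hb
        rw [conj_push, mul_one] at hval
        have := congrFun hval []
        rw [pushL_nil, pushL_nil] at this
        have hq : mkΛ θ h (1, b) = mkΛ θ h (x, a) := List.head_eq_of_cons_eq this
        have hg : θ (x⁻¹ * 1) b = some a := Quotient.exact hq
        rw [mul_one] at hg
        have := h.1.2.1 _ _ _ hg
        rw [inv_inv] at this
        rw [this]
        rfl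
end

section
/- Let θ be a partial action of a group G on a semigroup S whose domains D_x are ideals. If for every x ≠ 1 the ideal D_x is an idempotent semigroup ideal (D_x · D_x = D_x) or is weakly reductive, then the globalization condition θ(x, θ(x⁻¹, su)t) = s·θ(x, θ(x⁻¹,u)t) holds for all x ∈ G, u ∈ D_x, s,t ∈ S, and hence (θ,S) is globalizable in the category of global actions on semigroups. In particular this holds if S is an inverse semigroup or if each D_x is unital. -/
universe u

/-! The globalization condition is checked one `x` at a time: for `x = 1` it is associativity;
for an idempotent `D_x` one factors `u = v w` inside `D_x` and pushes `s` and `t` through the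
multiplicative bijection `θₓ`; for a weakly reductive `D_x` both sides have the same products
with every element of `D_x`.

The globalization is built from words of letters `(g, a)`, read as `g · a`, modulo the gluing
`(g, a) ∼ (h, θ(h⁻¹g, a))` and the merging `(g, a)(g, b) → (g, ab)`. The globalization
condition is exactly what makes the two ways of merging three overlapping letters agree, so
merging is confluent (Church–Rosser) on glued letters. Hence two single letters are identified
only if they are glued, which gives the injectivity of `S` and the description of the domains. -/

namespace IsPartialAction

variable {G A : Type u} [Group G] {θ : G → A → Option A}

theorem glueRel_equivalence (h : IsPartialAction θ) : Equivalence (glueRel θ) where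
  refl p := by simpa [glueRel] using h.1 p.2
  symm {p q} hpq := by simpa [glueRel] using h.2.1 _ _ _ hpq
  trans {p q r} hpq hqr := by simpa [glueRel, mul_assoc] using h.2.2 _ _ _ _ _ hpq hqr

theorem mk_eq_mk_iff_s18 (h : IsPartialAction θ) {p q : G × A} :
    Quot.mk (glueRel θ) p = Quot.mk (glueRel θ) q ↔ glueRel θ p q :=
  ⟨fun hpq => h.glueRel_equivalence.eqvGen_iff.1 (Quot.eqvGen_exact hpq), Quot.sound⟩

end IsPartialAction

section Translation

variable {G A : Type u} [Group G] {θ : G → A → Option A}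

def glueTranslate (z : G) : Quot (glueRel θ) → Quot (glueRel θ) :=
  Quot.map (fun p => (z * p.1, p.2)) fun p q hpq => by simpa [glueRel, mul_assoc] using hpq

theorem glueTranslate_one : glueTranslate (θ := θ) 1 = id :=
  funext <| Quot.ind fun p => by simp [glueTranslate, Quot.map]

theorem glueTranslate_comp (x y : G) :
    glueTranslate (θ := θ) x ∘ glueTranslate y = glueTranslate (x * y) :=
  funext <| Quot.ind fun p => by simp [glueTranslate, Quot.map, mul_assoc]

end Translation

namespace IsIdealPartialAction

variable {G S : Type u} [Group G] [Semigroup S] {θ : G → S → Option S} {x : G} {a b p q : S}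

theorem apply_one (h : IsIdealPartialAction θ) (a : S) : θ 1 a = some a := h.1.1 a

theorem apply_inv (h : IsIdealPartialAction θ) (hab : θ x a = some b) : θ x⁻¹ b = some a :=
  h.1.2.1 x a b hab

theorem apply_of_apply_inv (h : IsIdealPartialAction θ) (hab : θ x⁻¹ a = some b) :
    θ x b = some a := by
  simpa using h.apply_inv hab

theorem apply_mul (h : IsIdealPartialAction θ) (ha : θ x a = some p) (hb : θ x b = some q) :
    θ x (a * b) = some (p * q) :=
  h.2.2 x a b p q ha hb

theorem exists_apply_mul_right (h : IsIdealPartialAction θ) (ha : θ x a = some p) (t : S) :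
    ∃ q, θ x (a * t) = some q := by
  have hdom : a ∈ paDom θ x⁻¹ := by simp [paDom, ha]
  simpa [paDom, Option.isSome_iff_exists] using (h.2.1 _ a t hdom).1

theorem exists_apply_mul_left (h : IsIdealPartialAction θ) (ha : θ x a = some p) (t : S) :
    ∃ q, θ x (t * a) = some q := by
  have hdom : a ∈ paDom θ x⁻¹ := by simp [paDom, ha]
  simpa [paDom, Option.isSome_iff_exists] using (h.2.1 _ a t hdom).2

end IsIdealPartialAction

section GlobalizationCondition

variable {G S : Type u} [Group G] [Semigroup S] {θ : G → S → Option S}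

def GlobCondAt (θ : G → S → Option S) (x : G) : Prop :=
  ∀ u s t a b c d : S, θ x⁻¹ (s * u) = some a → θ x (a * t) = some b →
    θ x⁻¹ u = some c → θ x (c * t) = some d → b = s * d

def IsWeaklyReductive (D : Set S) : Prop :=
  ∀ a ∈ D, ∀ b ∈ D, (∀ d ∈ D, d * a = d * b ∧ a * d = b * d) → a = b

theorem globCondAt_one (h : IsIdealPartialAction θ) : GlobCondAt θ 1 := by
  intro u s t a b c d ha hb hc hd
  simp only [inv_one, h.apply_one, Option.some_inj] at ha hb hc hd
  subst ha hb hc hd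
  exact mul_assoc s u t

open scoped Pointwise in
theorem globCondAt_of_subset_mul (h : IsIdealPartialAction θ) {x : G}
    (hD : paDom θ x ⊆ paDom θ x * paDom θ x) : GlobCondAt θ x := by
  intro u s t a b c d ha hb hc hd
  obtain ⟨v, hv, w, hw, rfl⟩ := hD (show u ∈ paDom θ x by simp [paDom, hc])
  obtain ⟨v₁, hv₁⟩ := Option.isSome_iff_exists.1 hv
  obtain ⟨w₁, hw₁⟩ := Option.isSome_iff_exists.1 hw
  obtain ⟨p, hp⟩ := h.exists_apply_mul_left hv₁ s
  obtain ⟨e, he⟩ := h.exists_apply_mul_right (h.apply_of_apply_inv hw₁) t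
  have ha' : θ x⁻¹ (s * (v * w)) = some (p * w₁) := by
    rw [← mul_assoc]; exact h.apply_mul hp hw₁
  have hc' : θ x⁻¹ (v * w) = some (v₁ * w₁) := h.apply_mul hv₁ hw₁
  have hb' : θ x (p * w₁ * t) = some (s * v * e) := by
    rw [mul_assoc]; exact h.apply_mul (h.apply_of_apply_inv hp) he
  have hd' : θ x (v₁ * w₁ * t) = some (v * e) := by
    rw [mul_assoc]; exact h.apply_mul (h.apply_of_apply_inv hv₁) he
  rw [ha', Option.some_inj] at ha
  rw [hc', Option.some_inj] at hc
  subst ha hc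
  rw [hb', Option.some_inj] at hb
  rw [hd', Option.some_inj] at hd
  rw [← hb, ← hd, mul_assoc]

theorem globCondAt_of_isWeaklyReductive (h : IsIdealPartialAction θ) {x : G}
    (hD : IsWeaklyReductive (paDom θ x)) : GlobCondAt θ x := by
  intro u s t a b c d ha hb hc hd
  obtain ⟨sd₁, hsd⟩ := h.exists_apply_mul_left (h.apply_inv hd) s
  refine hD b (by simp [paDom, h.apply_inv hb]) (s * d) (by simp [paDom, hsd]) fun e he => ?_
  obtain ⟨e₁, he₁⟩ := Option.isSome_iff_exists.1 he
  constructor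
  · obtain ⟨f, hf⟩ := h.exists_apply_mul_right he₁ s
    have hef : e₁ * a = f * c := by
      have h₁ := h.apply_mul he₁ ha
      rw [← mul_assoc, h.apply_mul hf hc, Option.some_inj] at h₁
      exact h₁.symm
    have h₂ := h.apply_mul (h.apply_of_apply_inv he₁) hb
    rw [← mul_assoc, hef, mul_assoc, h.apply_mul (h.apply_of_apply_inv hf) hd,
      Option.some_inj, mul_assoc] at h₂
    exact h₂.symm
  · obtain ⟨k, hk⟩ := h.exists_apply_mul_left (h.apply_of_apply_inv he₁) t
    have hdk : d * e = u * k := by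
      have h₁ := h.apply_mul hd (h.apply_of_apply_inv he₁)
      rw [mul_assoc, h.apply_mul (h.apply_of_apply_inv hc) hk, Option.some_inj] at h₁
      exact h₁.symm
    have h₂ := h.apply_mul hb (h.apply_of_apply_inv he₁)
    rw [mul_assoc, h.apply_mul (h.apply_of_apply_inv ha) hk, Option.some_inj, mul_assoc,
      ← hdk, ← mul_assoc] at h₂
    exact h₂.symm

end GlobalizationCondition

section MergeRewriting

open Relation

variable {α : Type*} {M : α → α → α → Prop}

inductive MergeStep (M : α → α → α → Prop) : List α → List α → Prop
  | head {a b c : α} {t : List α} : M a b c → MergeStep M (a :: b :: t) (c :: t)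
  | cons (a : α) {t t' : List α} : MergeStep M t t' → MergeStep M (a :: t) (a :: t')

def MergeEquiv (M : α → α → α → Prop) : List α → List α → Prop :=
  Join (ReflTransGen (MergeStep M))

namespace MergeStep

theorem append_right {u v : List α} (w : List α) (huv : MergeStep M u v) :
    MergeStep M (u ++ w) (v ++ w) := by
  induction huv with
  | head hm => exact head hm
  | cons a _ ih => exact cons a ih

theorem append_left {u v : List α} (w : List α) (huv : MergeStep M u v) :
    MergeStep M (w ++ u) (w ++ v) := by
  induction w with
  | nil => exact huv
  | cons a w ih => exact cons a ih

theorem map {β : Type*} {N : β → β → β → Prop} (f : α → β)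
    (hf : ∀ a b c, M a b c → N (f a) (f b) (f c)) {u v : List α} (huv : MergeStep M u v) :
    MergeStep N (u.map f) (v.map f) := by
  induction huv with
  | head hm => exact head (hf _ _ _ hm)
  | cons a _ ih => exact cons (f a) ih

theorem not_singleton {a : α} {v : List α} : ¬ MergeStep M [a] v := by
  rintro (_ | ⟨_, ⟨⟩⟩)

theorem reflGen_cons (a : α) {t t' : List α} (h : ReflGen (MergeStep M) t t') :
    ReflGen (MergeStep M) (a :: t) (a :: t') := by
  cases h with
  | refl => exact .refl
  | single h => exact .single (cons a h)

theorem diamond (hfun : ∀ a b c c', M a b c → M a b c' → c = c')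
    (hassoc : ∀ a b c d e, M a b c → M b d e → ∃ f, M c d f ∧ M a e f)
    {u v w : List α} (huv : MergeStep M u v) (huw : MergeStep M u w) :
    ∃ x, ReflGen (MergeStep M) v x ∧ ReflGen (MergeStep M) w x := by
  induction huv generalizing w with
  | head hm =>
    rcases huw with hm' | ⟨_, hm' | ⟨_, hs⟩⟩
    · obtain rfl := hfun _ _ _ _ hm hm'
      exact ⟨_, .refl, .refl⟩
    · obtain ⟨f, hf₁, hf₂⟩ := hassoc _ _ _ _ _ hm hm'
      exact ⟨_, .single (head hf₁), .single (head hf₂)⟩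
    · exact ⟨_, .single (cons _ hs), .single (head hm)⟩
  | cons a hs ih =>
    rcases huw with hm' | ⟨_, huw⟩
    · rcases hs with hm | ⟨_, hs⟩
      · obtain ⟨f, hf₁, hf₂⟩ := hassoc _ _ _ _ _ hm' hm
        exact ⟨_, .single (head hf₂), .single (head hf₁)⟩
      · exact ⟨_, .single (head hm'), .single (cons _ hs)⟩
    · obtain ⟨x, hvx, hwx⟩ := ih huw
      exact ⟨a :: x, reflGen_cons a hvx, reflGen_cons a hwx⟩

end MergeStep

theorem reflTransGen_mergeStep_singleton {a : α} {v : List α}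
    (h : ReflTransGen (MergeStep M) [a] v) : v = [a] := by
  induction h with
  | refl => rfl
  | tail _ hstep ih => exact (MergeStep.not_singleton (ih ▸ hstep)).elim

namespace MergeEquiv

theorem equivalence (hfun : ∀ a b c c', M a b c → M a b c' → c = c')
    (hassoc : ∀ a b c d e, M a b c → M b d e → ∃ f, M c d f ∧ M a e f) :
    Equivalence (MergeEquiv M) :=
  equivalence_join_reflTransGen fun _ _ _ huv huw =>
    let ⟨x, hvx, hwx⟩ := MergeStep.diamond hfun hassoc huv huw
    ⟨x, hvx, hwx.to_reflTransGen⟩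

theorem append_right {u v : List α} (w : List α) (huv : MergeEquiv M u v) :
    MergeEquiv M (u ++ w) (v ++ w) :=
  let ⟨x, hux, hvx⟩ := huv
  ⟨x ++ w, ReflTransGen.lift (· ++ w) (fun _ _ => MergeStep.append_right w) _ _ hux,
    ReflTransGen.lift (· ++ w) (fun _ _ => MergeStep.append_right w) _ _ hvx⟩

theorem append_left {u v : List α} (w : List α) (huv : MergeEquiv M u v) :
    MergeEquiv M (w ++ u) (w ++ v) :=
  let ⟨x, hux, hvx⟩ := huv
  ⟨w ++ x, ReflTransGen.lift (w ++ ·) (fun _ _ => MergeStep.append_left w) _ _ hux,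
    ReflTransGen.lift (w ++ ·) (fun _ _ => MergeStep.append_left w) _ _ hvx⟩

theorem map {β : Type*} {N : β → β → β → Prop} (f : α → β)
    (hf : ∀ a b c, M a b c → N (f a) (f b) (f c)) {u v : List α} (huv : MergeEquiv M u v) :
    MergeEquiv N (u.map f) (v.map f) :=
  let ⟨x, hux, hvx⟩ := huv
  ⟨x.map f, ReflTransGen.lift (List.map f) (fun _ _ => MergeStep.map f hf) _ _ hux,
    ReflTransGen.lift (List.map f) (fun _ _ => MergeStep.map f hf) _ _ hvx⟩

theorem of_merge {a b c : α} (h : M a b c) : MergeEquiv M [a, b] [c] :=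
  ⟨[c], .single (MergeStep.head h), .refl⟩

theorem eq_of_singleton {a b : α} (h : MergeEquiv M [a] [b]) : a = b := by
  obtain ⟨x, hax, hbx⟩ := h
  simpa using (reflTransGen_mergeStep_singleton hax).symm.trans
    (reflTransGen_mergeStep_singleton hbx)

end MergeEquiv

end MergeRewriting

section Globalization

variable {G S : Type u} [Group G] [Semigroup S] {θ : G → S → Option S}

-- The class of `(g, a)` stands for the point `g · a` of the globalization.
def Merges (θ : G → S → Option S) (α β γ : Quot (glueRel θ)) : Prop :=
  ∃ g a b, α = Quot.mk _ (g, a) ∧ β = Quot.mk _ (g, b) ∧ γ = Quot.mk _ (g, a * b)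

theorem merges_functional (h : IsIdealPartialAction θ) (α β γ γ' : Quot (glueRel θ))
    (hγ : Merges θ α β γ) (hγ' : Merges θ α β γ') : γ = γ' := by
  obtain ⟨g, a, b, rfl, rfl, rfl⟩ := hγ
  obtain ⟨g', a', b', ha, hb, rfl⟩ := hγ'
  rw [h.1.mk_eq_mk_iff_s18] at ha hb ⊢
  exact h.apply_mul ha hb

theorem merges_assoc (h : IsIdealPartialAction θ) (hθ : SemGlobCond θ)
    (α β γ δ ε : Quot (glueRel θ)) (hγ : Merges θ α β γ) (hε : Merges θ β δ ε) :
    ∃ ζ, Merges θ γ δ ζ ∧ Merges θ α ε ζ := by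
  obtain ⟨g, a, b, rfl, hβ, rfl⟩ := hγ
  obtain ⟨k, b', d, hβ', rfl, rfl⟩ := hε
  have hb : θ (k⁻¹ * g) b = some b' := h.1.mk_eq_mk_iff_s18.1 (hβ.symm.trans hβ')
  obtain ⟨m, hm⟩ := h.exists_apply_mul_left hb a
  obtain ⟨n, hn⟩ := h.exists_apply_mul_right (h.apply_inv hb) d
  obtain ⟨r, hr⟩ := h.exists_apply_mul_right (h.apply_inv hm) d
  have hr' : r = a * n :=
    hθ (k⁻¹ * g)⁻¹ b a d m r b' n (by simpa using hm) hr (by simpa using hb) hn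
  simp only [mul_inv_rev, inv_inv] at hn hr
  rw [hr'] at hr
  have hζ : glueRel θ (k, m * d) (g, a * n) := hr
  exact ⟨Quot.mk _ (g, a * n), ⟨k, m, d, Quot.sound hm, rfl, (Quot.sound hζ).symm⟩,
    ⟨g, a, n, rfl, Quot.sound hn, rfl⟩⟩

theorem merges_glueTranslate (z : G) (α β γ : Quot (glueRel θ)) (hγ : Merges θ α β γ) :
    Merges θ (glueTranslate z α) (glueTranslate z β) (glueTranslate z γ) := by
  obtain ⟨g, a, b, rfl, rfl, rfl⟩ := hγ
  exact ⟨z * g, a, b, rfl, rfl, rfl⟩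

theorem hasSemigroupGlobalization_of_semGlobCond (h : IsIdealPartialAction θ)
    (hθ : SemGlobCond θ) : HasSemigroupGlobalization θ := by
  have hequiv := MergeEquiv.equivalence (merges_functional h) (merges_assoc h hθ)
  let act (z : G) : Quot (MergeEquiv (Merges θ)) → Quot (MergeEquiv (Merges θ)) :=
    Quot.map (List.map (glueTranslate z)) fun _ _ =>
      MergeEquiv.map _ (merges_glueTranslate z)
  let ι (a : S) : Quot (MergeEquiv (Merges θ)) := Quot.mk _ [Quot.mk _ (1, a)]
  have act_ι_eq_ι_iff (x : G) (a b : S) : act x (ι a) = ι b ↔ θ x a = some b := by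
    refine ⟨fun hab => ?_, fun hab => congrArg (Quot.mk _ [·]) (Quot.sound ?_)⟩
    · have := MergeEquiv.eq_of_singleton (hequiv.eqvGen_iff.1 (Quot.eqvGen_exact hab))
      simpa [glueTranslate, Quot.map, h.1.mk_eq_mk_iff_s18, glueRel] using this
    · simpa [glueRel] using hab
  refine ⟨Quot (MergeEquiv (Merges θ)),
    Quot.map₂ (· ++ ·) (fun w _ _ => MergeEquiv.append_left w)
      (fun _ _ w => MergeEquiv.append_right w), act, ι, ?_, ?_, ?_, ?_, ?_, ?_, ?_, ?_⟩
  · rintro ⟨u⟩ ⟨v⟩ ⟨w⟩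
    exact congrArg (Quot.mk _) (List.append_assoc u v w)
  · rintro ⟨u⟩
    exact congrArg (Quot.mk _) (by simp [glueTranslate_one])
  · rintro x y ⟨u⟩
    exact congrArg (Quot.mk _) (by simp [← glueTranslate_comp x y])
  · rintro x ⟨u⟩ ⟨v⟩
    exact congrArg (Quot.mk _) (List.map_append ..)
  · intro a b hab
    simpa [h.apply_one] using (act_ι_eq_ι_iff 1 a b).1 (by simpa [act, glueTranslate_one])
  · intro a b
    exact (Quot.sound (MergeEquiv.of_merge ⟨1, a, b, rfl, rfl, rfl⟩)).symm
  · intro x a b hab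
    exact (act_ι_eq_ι_iff x a b).2 hab
  · intro x a
    simp only [Option.isSome_iff_exists, Set.mem_range, eq_comm (a := ι _), act_ι_eq_ι_iff]

end Globalization

/-- if for every `x ≠ 1` the ideal `D_x` is idempotent (`D_x·D_x = D_x`)
or weakly reductive, then the globalization condition holds and `(θ,S)` is
globalizable in the category of global actions on semigroups. -/
theorem stmt_18 {G S : Type u} [Group G] [Semigroup S]
    (θ : G → S → Option S) (h : IsIdealPartialAction θ)
    (hdom : ∀ x : G, x ≠ 1 →
      (∀ u ∈ paDom θ x, ∃ v ∈ paDom θ x, ∃ w ∈ paDom θ x, u = v * w) ∨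
      (∀ a ∈ paDom θ x, ∀ b ∈ paDom θ x,
        (∀ d ∈ paDom θ x, d * a = d * b ∧ a * d = b * d) → a = b)) :
    SemGlobCond θ ∧ HasSemigroupGlobalization θ := by
  have hθ : ∀ x, GlobCondAt θ x := by
    intro x
    by_cases hx : x = 1
    · exact hx ▸ globCondAt_one h
    rcases hdom x hx with hidem | hred
    · refine globCondAt_of_subset_mul h fun u hu => ?_
      obtain ⟨v, hv, w, hw, rfl⟩ := hidem u hu
      exact Set.mul_mem_mul hv hw
    · exact globCondAt_of_isWeaklyReductive h hred
  exact ⟨hθ, hasSemigroupGlobalization_of_semGlobCond h hθ⟩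
end

section
/- Let θ be a partial action of a group G on a semigroup S such that each domain D_x is a unital ideal, D_x = 1_x·S for a central idempotent 1_x ∈ S. On S^U = (G×S)/∼, define [x,s] * [y,t] = [x, s·θ(x⁻¹y, 1_{y⁻¹x}·t)]. Then: (i) * is well defined and associative, making S^U a semigroup; (ii) the global action θ^U(z,[x,s]) = [zx,s] acts by semigroup automorphisms of (S^U, *); (iii) s ↦ [1,s] is an injective semigroup homomorphism S → S^U whose image is an ideal of (S^U, *); and (iv) (θ^U, (S^U,*)) is a globalization of (θ,S). -/
universe u

/-- Auxiliary: the canonical value `θ(x⁻¹y)(1_{y⁻¹x}·t)` used in the product formula. -/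
def Fdef {G S : Type u} [Group G] [Semigroup S] (θ : G → S → Option S) (e : G → S)
    (x y : G) (t : S) : S :=
  (θ (x⁻¹ * y) (e (y⁻¹ * x) * t)).getD t

/-- for a partial action on a semigroup `S` whose domains are unital
ideals `D_x = 1ₓ·S` (with `1ₓ` a central idempotent), the formula
`[x,s] * [y,t] = [x, s·θ(x⁻¹y, 1_{y⁻¹x}·t)]` defines an associative operation on
`S^U = (G×S)/∼`; the global action `z·[x,s] = [zx,s]` acts by semigroup automorphisms;
`s ↦ [1,s]` is an injective homomorphism whose image is an ideal; and the result is a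
globalization of `(θ,S)`. -/
theorem stmt_19 {G S : Type u} [Group G] [Semigroup S]
    (θ : G → S → Option S) (h : IsIdealPartialAction θ)
    (e : G → S)
    (hcentral : ∀ (x : G) (s : S), e x * s = s * e x)
    (hidem : ∀ x : G, e x * e x = e x)
    (hdom : ∀ (x : G) (s : S), s ∈ paDom θ x ↔ e x * s = s) :
    ∃ (m : Quot (glueRel θ) → Quot (glueRel θ) → Quot (glueRel θ))
      (act : G → Quot (glueRel θ) → Quot (glueRel θ)),
      -- (i) the multiplication is given by the stated formula and is associative
      (∀ (x y : G) (s t u : S),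
        θ (x⁻¹ * y) (e (y⁻¹ * x) * t) = some u →
        m (Quot.mk (glueRel θ) (x, s)) (Quot.mk (glueRel θ) (y, t)) =
          Quot.mk (glueRel θ) (x, s * u)) ∧
      (∀ p q r, m (m p q) r = m p (m q r)) ∧
      -- (ii) the canonical global action acts by semigroup automorphisms
      (∀ (z x : G) (s : S),
        act z (Quot.mk (glueRel θ) (x, s)) = Quot.mk (glueRel θ) (z * x, s)) ∧
      (∀ q, act 1 q = q) ∧
      (∀ z w q, act z (act w q) = act (z * w) q) ∧
      (∀ (z : G) (p q : Quot (glueRel θ)), act z (m p q) = m (act z p) (act z q)) ∧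
      -- (iii) s ↦ [1,s] is an injective homomorphism with ideal image
      Function.Injective (fun s : S => Quot.mk (glueRel θ) ((1 : G), s)) ∧
      (∀ s t : S,
        m (Quot.mk (glueRel θ) ((1 : G), s)) (Quot.mk (glueRel θ) ((1 : G), t)) =
          Quot.mk (glueRel θ) ((1 : G), s * t)) ∧
      (∀ (q : Quot (glueRel θ)) (s : S),
        (∃ s', m q (Quot.mk (glueRel θ) ((1 : G), s)) = Quot.mk (glueRel θ) ((1 : G), s')) ∧
        (∃ s'', m (Quot.mk (glueRel θ) ((1 : G), s)) q = Quot.mk (glueRel θ) ((1 : G), s''))) ∧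
      -- (iv) globalization
      (∀ (x : G) (s : S), (θ x s).isSome ↔
        act x (Quot.mk (glueRel θ) ((1 : G), s)) ∈
          Set.range (fun t : S => Quot.mk (glueRel θ) ((1 : G), t))) := by
  obtain ⟨⟨hid, hinv, hcomp⟩, hideal, hmul⟩ := h
  -- basic algebraic helpers
  have eswap : ∀ (w v : G) (s : S), e w * (e v * s) = e v * (e w * s) := by
    intro w v s; rw [← mul_assoc, hcentral w (e v), mul_assoc]
  have eabsorb : ∀ (w : G) (s : S), e w * (e w * s) = e w * s := by
    intro w s; rw [← mul_assoc, hidem]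
  have epush : ∀ (w : G) (s t : S), s * (e w * t) = e w * (s * t) := by
    intro w s t; rw [← mul_assoc, ← hcentral, mul_assoc]
  have hsome : ∀ (w : G) (s : S), (θ w s).isSome ↔ e w⁻¹ * s = s := by
    intro w s
    have h1 := hdom w⁻¹ s
    simpa [paDom, Set.mem_setOf_eq, inv_inv] using h1
  have hdef : ∀ (w : G) (s : S), e w⁻¹ * s = s → ∃ u, θ w s = some u := fun w s hs =>
    Option.isSome_iff_exists.mp ((hsome w s).mpr hs)
  have hdome : ∀ {w : G} {a b : S}, θ w a = some b → e w⁻¹ * a = a := by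
    intro w a b hab
    exact (hsome w a).mp (by rw [hab]; rfl)
  have hran : ∀ {w : G} {a b : S}, θ w a = some b → e w * b = b := by
    intro w a b hab
    have h2 := hdome (hinv _ _ _ hab)
    rwa [inv_inv] at h2
  -- the key identity θ z (1_{z⁻¹}·1_v) = 1_z·1_{zv}
  have hkey : ∀ z v : G, θ z (e z⁻¹ * e v) = some (e z * e (z * v)) := by
    intro z v
    obtain ⟨p, hp⟩ := hdef z _ (eabsorb z⁻¹ (e v))
    have hp1 : e z * p = p := hran hp
    have hzp := hinv _ _ _ hp
    obtain ⟨w, hw⟩ := hdef v⁻¹ (e z⁻¹ * e v) (by rw [inv_inv, eswap, hidem])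
    have hp2 : e (z * v) * p = p := by
      have h3 := hcomp v⁻¹ z⁻¹ _ _ _ hzp hw
      have h4 : (θ (z * v)⁻¹ p).isSome := by rw [mul_inv_rev, h3]; rfl
      have h5 := (hsome _ _).mp h4
      rwa [inv_inv] at h5
    obtain ⟨qt, hqt⟩ := hdef z⁻¹ (e z * e (z * v)) (by rw [inv_inv, eabsorb])
    have h1 : e z⁻¹ * qt = qt := hran hqt
    obtain ⟨w', hw'⟩ := hdef (z * v)⁻¹ (e z * e (z * v)) (by rw [inv_inv, eswap, hidem])
    have hzqt := hinv _ _ _ hqt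
    rw [inv_inv] at hzqt
    have h6 := hcomp (z * v)⁻¹ z _ _ _ hzqt hw'
    have hg : (z * v)⁻¹ * z = v⁻¹ := by group
    rw [hg] at h6
    have h2 : e v * qt = qt := by
      have h7 := (hsome v⁻¹ qt).mp (by rw [h6]; rfl)
      rwa [inv_inv] at h7
    have h3 : (e z⁻¹ * e v) * qt = qt := by rw [mul_assoc, h2, h1]
    have h4 := hmul z _ _ _ _ hp hzqt
    rw [h3, hzqt] at h4
    have h5 : p * (e z * e (z * v)) = e z * e (z * v) := (Option.some.inj h4).symm
    have h7 : p * (e z * e (z * v)) = p := by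
      rw [← mul_assoc, ← hcentral z p, hp1, ← hcentral (z * v) p, hp2]
    rw [hp, ← h5, h7]
  -- specification of Fdef
  have Fspec : ∀ (x y : G) (t : S),
      θ (x⁻¹ * y) (e (y⁻¹ * x) * t) = some (Fdef θ e x y t) := by
    intro x y t
    have harg : e (x⁻¹ * y)⁻¹ * (e (y⁻¹ * x) * t) = e (y⁻¹ * x) * t := by
      have hg : (x⁻¹ * y)⁻¹ = y⁻¹ * x := by group
      rw [hg]; exact eabsorb _ _
    obtain ⟨u, hu⟩ := hdef _ _ harg
    rw [hu]; unfold Fdef; rw [hu]; rfl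
  -- right well-definedness
  have FW1 : ∀ (x y y' : G) (t t' : S), θ (y'⁻¹ * y) t = some t' →
      Fdef θ e x y t = Fdef θ e x y' t' := by
    intro x y y' t t' ht
    have h1 : e (y'⁻¹ * y)⁻¹ * t = t := hdome ht
    have h2 : e (y'⁻¹ * y) * t' = t' := hran ht
    have hk := hkey (y'⁻¹ * y) (y⁻¹ * x)
    have hm := hmul _ _ _ _ _ hk ht
    have e1 : (e (y'⁻¹ * y)⁻¹ * e (y⁻¹ * x)) * t = e (y⁻¹ * x) * t := by
      rw [mul_assoc, eswap, h1]
    have hg : (y'⁻¹ * y) * (y⁻¹ * x) = y'⁻¹ * x := by group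
    rw [hg] at hm
    have e2 : (e (y'⁻¹ * y) * e (y'⁻¹ * x)) * t' = e (y'⁻¹ * x) * t' := by
      rw [mul_assoc, eswap, h2]
    rw [e1, e2] at hm
    have hc := hcomp (x⁻¹ * y') (y'⁻¹ * y) _ _ _ hm (Fspec x y' t')
    have hg2 : (x⁻¹ * y') * (y'⁻¹ * y) = x⁻¹ * y := by group
    rw [hg2] at hc
    exact Option.some.inj ((Fspec x y t).symm.trans hc)
  -- left well-definedness
  have FW2 : ∀ (x x' y : G) (s s' t : S), θ (x'⁻¹ * x) s = some s' →
      θ (x'⁻¹ * x) (s * Fdef θ e x y t) = some (s' * Fdef θ e x' y t) := by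
    intro x x' y s s' t hs
    have hF₁ := Fspec x y t
    have hF₂ := Fspec x' y t
    have hr₁ : e (x⁻¹ * y) * Fdef θ e x y t = Fdef θ e x y t := hran hF₁
    have hr₂ : e (x'⁻¹ * y) * Fdef θ e x' y t = Fdef θ e x' y t := hran hF₂
    have hkA := hkey (x⁻¹ * y) (y⁻¹ * x')
    have hg1 : (x⁻¹ * y)⁻¹ = y⁻¹ * x := by group
    have hg2 : (x⁻¹ * y) * (y⁻¹ * x') = (x'⁻¹ * x)⁻¹ := by group
    rw [hg1, hg2] at hkA
    have hA := hmul _ _ _ _ _ hkA hF₁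
    have ea : (e (y⁻¹ * x) * e (y⁻¹ * x')) * (e (y⁻¹ * x) * t)
        = e (y⁻¹ * x) * (e (y⁻¹ * x') * t) := by
      rw [mul_assoc, eswap (y⁻¹ * x') (y⁻¹ * x) t, eabsorb]
    have eb : (e (x⁻¹ * y) * e (x'⁻¹ * x)⁻¹) * Fdef θ e x y t
        = e (x'⁻¹ * x)⁻¹ * Fdef θ e x y t := by
      rw [mul_assoc, eswap, hr₁]
    rw [ea, eb] at hA
    have hkB := hkey (x'⁻¹ * y) (y⁻¹ * x)
    have hg3 : (x'⁻¹ * y)⁻¹ = y⁻¹ * x' := by group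
    have hg4 : (x'⁻¹ * y) * (y⁻¹ * x) = x'⁻¹ * x := by group
    rw [hg3, hg4] at hkB
    have hB := hmul _ _ _ _ _ hkB hF₂
    have ec : (e (y⁻¹ * x') * e (y⁻¹ * x)) * (e (y⁻¹ * x') * t)
        = e (y⁻¹ * x) * (e (y⁻¹ * x') * t) := by
      rw [mul_assoc, eswap (y⁻¹ * x) (y⁻¹ * x') t, eabsorb,
        eswap (y⁻¹ * x') (y⁻¹ * x) t]
    have ed : (e (x'⁻¹ * y) * e (x'⁻¹ * x)) * Fdef θ e x' y t
        = e (x'⁻¹ * x) * Fdef θ e x' y t := by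
      rw [mul_assoc, eswap, hr₂]
    rw [ec, ed] at hB
    have hAinv := hinv _ _ _ hA
    rw [hg1] at hAinv
    have hC := hcomp (x'⁻¹ * y) (y⁻¹ * x) _ _ _ hAinv hB
    rw [hg4] at hC
    have hds : e (x'⁻¹ * x)⁻¹ * s = s := hdome hs
    have hM := hmul _ _ _ _ _ hs hC
    have ee : s * (e (x'⁻¹ * x)⁻¹ * Fdef θ e x y t) = s * Fdef θ e x y t := by
      rw [epush, ← mul_assoc, hds]
    have ef : s' * (e (x'⁻¹ * x) * Fdef θ e x' y t) = s' * Fdef θ e x' y t := by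
      have hrs' : e (x'⁻¹ * x) * s' = s' := hran hs
      rw [epush, ← mul_assoc, hrs']
    rw [ee, ef] at hM
    exact hM
  -- quasi-associativity of Fdef
  have hFassoc : ∀ (x y z' : G) (t r : S),
      Fdef θ e x y t * Fdef θ e x z' r = Fdef θ e x y (t * Fdef θ e y z' r) := by
    intro x y z' t r
    have hq := Fspec y z' r
    have hF₁ := Fspec x y t
    have hF₂ := Fspec x z' r
    have hrq : e (y⁻¹ * z') * Fdef θ e y z' r = Fdef θ e y z' r := hran hq
    have hr₁ : e (x⁻¹ * y) * Fdef θ e x y t = Fdef θ e x y t := hran hF₁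
    have hr₂ : e (x⁻¹ * z') * Fdef θ e x z' r = Fdef θ e x z' r := hran hF₂
    have hk1 := hkey (z'⁻¹ * y) (y⁻¹ * x)
    have hg1 : (z'⁻¹ * y)⁻¹ = y⁻¹ * z' := by group
    have hg2 : (z'⁻¹ * y) * (y⁻¹ * x) = z'⁻¹ * x := by group
    rw [hg1, hg2] at hk1
    have hq2 := hinv _ _ _ hq
    have hg3 : (y⁻¹ * z')⁻¹ = z'⁻¹ * y := by group
    rw [hg3] at hq2
    have hR3 := hmul _ _ _ _ _ hk1 hq2
    have eg : (e (y⁻¹ * z') * e (y⁻¹ * x)) * Fdef θ e y z' r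
        = e (y⁻¹ * x) * Fdef θ e y z' r := by
      rw [mul_assoc, eswap, hrq]
    have eh : (e (z'⁻¹ * y) * e (z'⁻¹ * x)) * (e (z'⁻¹ * y) * r)
        = e (z'⁻¹ * x) * (e (z'⁻¹ * y) * r) := by
      rw [mul_assoc, eswap (z'⁻¹ * x) (z'⁻¹ * y) r, eabsorb,
        eswap (z'⁻¹ * y) (z'⁻¹ * x) r]
    rw [eg, eh] at hR3
    have hk5 := hkey (x⁻¹ * z') (z'⁻¹ * y)
    have hg4 : (x⁻¹ * z')⁻¹ = z'⁻¹ * x := by group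
    have hg5 : (x⁻¹ * z') * (z'⁻¹ * y) = x⁻¹ * y := by group
    rw [hg4, hg5] at hk5
    have hR6 := hmul _ _ _ _ _ hk5 hF₂
    have ei : (e (z'⁻¹ * x) * e (z'⁻¹ * y)) * (e (z'⁻¹ * x) * r)
        = e (z'⁻¹ * x) * (e (z'⁻¹ * y) * r) := by
      rw [mul_assoc, eswap (z'⁻¹ * y) (z'⁻¹ * x) r, eabsorb]
    have ej : (e (x⁻¹ * z') * e (x⁻¹ * y)) * Fdef θ e x z' r
        = e (x⁻¹ * y) * Fdef θ e x z' r := by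
      rw [mul_assoc, eswap, hr₂]
    rw [ei, ej] at hR6
    have hR7 := hcomp (x⁻¹ * z') (z'⁻¹ * y) _ _ _ hR3 hR6
    rw [hg5] at hR7
    have hR8 := hmul _ _ _ _ _ hF₁ hR7
    have ek : (e (y⁻¹ * x) * t) * (e (y⁻¹ * x) * Fdef θ e y z' r)
        = e (y⁻¹ * x) * (t * Fdef θ e y z' r) := by
      rw [mul_assoc, epush, eabsorb]
    have el : Fdef θ e x y t * (e (x⁻¹ * y) * Fdef θ e x z' r)
        = Fdef θ e x y t * Fdef θ e x z' r := by
      rw [epush, ← mul_assoc, hr₁]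
    rw [ek, el] at hR8
    exact (Option.some.inj ((Fspec x y (t * Fdef θ e y z' r)).symm.trans hR8)).symm
  -- the relation is an equivalence
  have hrefl : ∀ p : G × S, glueRel θ p p := by
    intro p
    show θ (p.1⁻¹ * p.1) p.2 = some p.2
    rw [inv_mul_cancel]; exact hid p.2
  have hsymmR : ∀ p q, glueRel θ p q → glueRel θ q p := by
    intro p q hpq
    have h1 := hinv _ _ _ hpq
    show θ (p.1⁻¹ * q.1) q.2 = some p.2
    rwa [mul_inv_rev, inv_inv] at h1
  have htransR : ∀ p q r, glueRel θ p q → glueRel θ q r → glueRel θ p r := by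
    intro p q r h1 h2
    have h3 := hcomp (r.1⁻¹ * q.1) (q.1⁻¹ * p.1) _ _ _ h1 h2
    have hg : (r.1⁻¹ * q.1) * (q.1⁻¹ * p.1) = r.1⁻¹ * p.1 := by group
    rwa [hg] at h3
  have hexact : ∀ p q, Quot.mk (glueRel θ) p = Quot.mk (glueRel θ) q → glueRel θ p q := by
    intro p q hpq
    have heq : Equivalence (glueRel θ) :=
      ⟨hrefl, fun {a b} h => hsymmR a b h, fun {a b c} h1 h2 => htransR a b c h1 h2⟩
    exact heq.eqvGen_iff.mp (Quot.eqvGen_exact hpq)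
  have actwd : ∀ (z : G) (p q : G × S), glueRel θ p q →
      Quot.mk (glueRel θ) (z * p.1, p.2) = Quot.mk (glueRel θ) (z * q.1, q.2) := by
    intro z p q hpq
    apply Quot.sound
    show θ ((z * q.1)⁻¹ * (z * p.1)) p.2 = some q.2
    have hg : (z * q.1)⁻¹ * (z * p.1) = q.1⁻¹ * p.1 := by group
    rw [hg]; exact hpq
  refine ⟨Quot.lift₂ (fun p q => Quot.mk (glueRel θ) (p.1, p.2 * Fdef θ e p.1 q.1 q.2))
      (fun p q q' hq => by
        show Quot.mk (glueRel θ) (p.1, p.2 * Fdef θ e p.1 q.1 q.2)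
            = Quot.mk (glueRel θ) (p.1, p.2 * Fdef θ e p.1 q'.1 q'.2)
        rw [FW1 p.1 q.1 q'.1 q.2 q'.2 hq])
      (fun p p' q hp => Quot.sound (FW2 p.1 p'.1 q.1 p.2 p'.2 q.2 hp)),
    fun z => Quot.lift (fun p => Quot.mk (glueRel θ) (z * p.1, p.2)) (actwd z),
    ?_, ?_, ?_, ?_, ?_, ?_, ?_, ?_, ?_, ?_⟩
  · -- product formula
    intro x y s t u hu
    have hFu : Fdef θ e x y t = u := Option.some.inj ((Fspec x y t).symm.trans hu)
    show Quot.mk (glueRel θ) (x, s * Fdef θ e x y t) = Quot.mk (glueRel θ) (x, s * u)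
    rw [hFu]
  · -- associativity
    intro p q r
    induction p using Quot.ind with | _ a =>
    induction q using Quot.ind with | _ b =>
    induction r using Quot.ind with | _ c =>
    obtain ⟨x, s⟩ := a; obtain ⟨y, t⟩ := b; obtain ⟨z', r'⟩ := c
    show Quot.mk (glueRel θ) (x, (s * Fdef θ e x y t) * Fdef θ e x z' r')
        = Quot.mk (glueRel θ) (x, s * Fdef θ e x y (t * Fdef θ e y z' r'))
    rw [mul_assoc, hFassoc]
  · -- action formula
    intro z x s; rfl
  · -- act 1
    intro q
    induction q using Quot.ind with | _ a =>
    obtain ⟨x, s⟩ := a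
    show Quot.mk (glueRel θ) (1 * x, s) = Quot.mk (glueRel θ) (x, s)
    rw [one_mul]
  · -- act comp
    intro z w q
    induction q using Quot.ind with | _ a =>
    obtain ⟨x, s⟩ := a
    show Quot.mk (glueRel θ) (z * (w * x), s) = Quot.mk (glueRel θ) ((z * w) * x, s)
    rw [mul_assoc]
  · -- act is multiplicative
    intro z p q
    induction p using Quot.ind with | _ a =>
    induction q using Quot.ind with | _ b =>
    obtain ⟨x, s⟩ := a; obtain ⟨y, t⟩ := b
    show Quot.mk (glueRel θ) (z * x, s * Fdef θ e x y t)
        = Quot.mk (glueRel θ) (z * x, s * Fdef θ e (z * x) (z * y) t)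
    have hF : Fdef θ e (z * x) (z * y) t = Fdef θ e x y t := by
      unfold Fdef
      have hg1 : (z * x)⁻¹ * (z * y) = x⁻¹ * y := by group
      have hg2 : (z * y)⁻¹ * (z * x) = y⁻¹ * x := by group
      rw [hg1, hg2]
    rw [hF]
  · -- injectivity
    intro s t hst
    have h1 := hexact ((1 : G), s) ((1 : G), t) hst
    have h2 : θ ((1 : G)⁻¹ * 1) s = some t := h1
    rw [inv_one, one_mul] at h2
    rw [hid s] at h2
    exact Option.some.inj h2
  · -- homomorphism
    intro s t
    have he1 : ∀ u : S, e 1 * u = u := by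
      intro u
      apply (hdom 1 u).mp
      show (θ (1 : G)⁻¹ u).isSome
      rw [inv_one, hid]; rfl
    have hF : Fdef θ e 1 1 t = t := by
      have h1 := Fspec 1 1 t
      rw [inv_one, one_mul, he1, hid] at h1
      exact (Option.some.inj h1).symm
    show Quot.mk (glueRel θ) ((1 : G), s * Fdef θ e 1 1 t)
        = Quot.mk (glueRel θ) ((1 : G), s * t)
    rw [hF]
  · -- ideal
    intro q s
    induction q using Quot.ind with | _ a =>
    obtain ⟨x, s₀⟩ := a
    constructor
    · have hF0 := Fspec x 1 s
      have hg : x⁻¹ * (1 : G) = x⁻¹ := mul_one _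
      rw [hg] at hF0
      have hr0 : e x⁻¹ * Fdef θ e x 1 s = Fdef θ e x 1 s := hran hF0
      have h2 : e x⁻¹ * (s₀ * Fdef θ e x 1 s) = s₀ * Fdef θ e x 1 s := by
        rw [← epush, hr0]
      obtain ⟨u, hu⟩ := hdef x (s₀ * Fdef θ e x 1 s) h2
      refine ⟨u, Quot.sound ?_⟩
      show θ ((1 : G)⁻¹ * x) (s₀ * Fdef θ e x 1 s) = some u
      rw [inv_one, one_mul]; exact hu
    · exact ⟨s * Fdef θ e 1 x s₀, rfl⟩
  · -- globalization condition
    intro x s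
    constructor
    · intro hx
      obtain ⟨u, hu⟩ := Option.isSome_iff_exists.mp hx
      refine ⟨u, ?_⟩
      show Quot.mk (glueRel θ) ((1 : G), u) = Quot.mk (glueRel θ) (x * 1, s)
      apply Quot.sound
      show θ ((x * 1)⁻¹ * 1) u = some s
      have hg : (x * 1)⁻¹ * (1 : G) = x⁻¹ := by group
      rw [hg]; exact hinv _ _ _ hu
    · rintro ⟨t, ht⟩
      have h1 := hexact ((1 : G), t) (x * 1, s) ht
      have h2 : θ ((x * 1)⁻¹ * 1) t = some s := h1
      have hg : (x * 1)⁻¹ * (1 : G) = x⁻¹ := by group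
      rw [hg] at h2
      have h3 := hinv _ _ _ h2
      rw [inv_inv] at h3
      rw [h3]; rfl
end
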